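/- arXiv:2209.07047 — 7 statements merged into one kernel-verified Lean document; each statement's English description precedes it below -/
import Mathlib

section
/- Let G be a finite simple graph whose vertex set is V ∪ {s, t} with s ≠ t, s and t not adjacent, and each vertex of V adjacent to at most one of s and t. Let y : V → {0,1} be any labeling of the non-terminal vertices, and consider the s-t cut with parts V₁ = {s} ∪ {v ∈ V : y v = 1} and V₂ = {t} ∪ {v ∈ V : y v = 0}. Then the number of edges of G crossing the cut equals (the number of vertices v ∈ V adjacent to s with y v = 0) + (the number of vertices v ∈ V adjacent to t with y v = 1) + (the number of edges {u,v} of G with u, v ∈ V and y u ≠ y v). In particular, the cardinality of the cut equals the number of label flips plus the total error of the corresponding unit-weight label-flipping instance. -/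
/-!
Every cut edge has at most one terminal endpoint, because `s` and `t` are not adjacent. Cut
edges at `s` are the edges to the `0`-labelled vertices (the flips on the source side), those
at `t` are the edges to the `1`-labelled vertices, and the remaining cut edges join two
vertices of `V` with different labels, which is exactly the total error.
-/

open Finset

namespace SimpleGraph

variable {α : Type*} [DecidableEq α] (G : SimpleGraph α) [Fintype G.edgeSet]

def crossingEdges (P Q : Finset α) : Finset (Sym2 α) :=
  G.edgeFinset.filter fun e => ∃ u ∈ P, ∃ w ∈ Q, e = s(u, w)

variable {G}

theorem mem_crossingEdges {P Q : Finset α} {e : Sym2 α} :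
    e ∈ G.crossingEdges P Q ↔ e ∈ G.edgeFinset ∧ ∃ u ∈ P, ∃ w ∈ Q, e = s(u, w) :=
  mem_filter

theorem crossingEdges_comm (P Q : Finset α) : G.crossingEdges P Q = G.crossingEdges Q P := by
  ext e
  simp only [mem_crossingEdges]
  constructor <;>
  · rintro ⟨he, u, hu, w, hw, rfl⟩
    exact ⟨he, w, hw, u, hu, Sym2.eq_swap⟩

theorem crossingEdges_union_left (P P' Q : Finset α) :
    G.crossingEdges (P ∪ P') Q = G.crossingEdges P Q ∪ G.crossingEdges P' Q := by
  ext e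
  simp only [mem_union, mem_crossingEdges, exists_or, or_and_right, and_or_left]

theorem mem_union_of_mem_crossingEdges {P Q : Finset α} {e : Sym2 α}
    (he : e ∈ G.crossingEdges P Q) {x : α} (hx : x ∈ e) : x ∈ P ∪ Q := by
  obtain ⟨-, u, hu, w, hw, rfl⟩ := mem_crossingEdges.1 he
  rcases Sym2.mem_iff.1 hx with rfl | rfl
  · exact mem_union_left Q hu
  · exact mem_union_right P hw

theorem disjoint_crossingEdges {P Q P' Q' : Finset α} (h : Disjoint P (P' ∪ Q')) :
    Disjoint (G.crossingEdges P Q) (G.crossingEdges P' Q') := by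
  refine Finset.disjoint_left.2 fun e he he' => ?_
  obtain ⟨-, u, hu, w, -, rfl⟩ := mem_crossingEdges.1 he
  exact Finset.disjoint_left.1 h hu (mem_union_of_mem_crossingEdges he' (Sym2.mem_mk_left u w))

theorem card_crossingEdges_union_left {P P' Q : Finset α} (h : Disjoint P (P' ∪ Q)) :
    #(G.crossingEdges (P ∪ P') Q) = #(G.crossingEdges P Q) + #(G.crossingEdges P' Q) := by
  rw [crossingEdges_union_left, card_union_of_disjoint (disjoint_crossingEdges h)]

theorem card_crossingEdges_union_right {P Q Q' : Finset α} (h : Disjoint Q (Q' ∪ P)) :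
    #(G.crossingEdges P (Q ∪ Q')) = #(G.crossingEdges P Q) + #(G.crossingEdges P Q') := by
  simp only [crossingEdges_comm P]
  exact card_crossingEdges_union_left h

theorem crossingEdges_filter_eq_filter_ne {β : Type*} [DecidableEq β] {V : Finset α}
    {y : α → β} {a b : β} (hab : a ≠ b) (hy : ∀ v ∈ V, y v = a ∨ y v = b) :
    G.crossingEdges (V.filter (y · = a)) (V.filter (y · = b)) =
      G.edgeFinset.filter fun e => ∃ u ∈ V, ∃ w ∈ V, e = s(u, w) ∧ y u ≠ y w := by
  ext e
  simp only [mem_crossingEdges, mem_filter]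
  refine and_congr_right fun _ => ⟨?_, ?_⟩
  · rintro ⟨u, ⟨hu, rfl⟩, w, ⟨hw, hyw⟩, rfl⟩
    exact ⟨u, hu, w, hw, rfl, hyw ▸ hab⟩
  · rintro ⟨u, hu, w, hw, rfl, hne⟩
    rcases hy u hu with hyu | hyu <;> rcases hy w hw with hyw | hyw
    · exact absurd (hyu.trans hyw.symm) hne
    · exact ⟨u, ⟨hu, hyu⟩, w, ⟨hw, hyw⟩, rfl⟩
    · exact ⟨w, ⟨hw, hyw⟩, u, ⟨hu, hyu⟩, Sym2.eq_swap⟩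
    · exact absurd (hyu.trans hyw.symm) hne

variable [DecidableRel G.Adj]

theorem crossingEdges_singleton_left (a : α) (S : Finset α) :
    G.crossingEdges {a} S = (S.filter (G.Adj a)).image (s(a, ·)) := by
  ext e
  simp only [mem_crossingEdges, mem_image, mem_filter, mem_singleton, exists_eq_left]
  constructor
  · rintro ⟨he, w, hw, rfl⟩
    exact ⟨w, ⟨hw, mem_edgeFinset.1 he⟩, rfl⟩
  · rintro ⟨w, ⟨hw, hadj⟩, rfl⟩
    exact ⟨mem_edgeFinset.2 hadj, w, hw, rfl⟩

theorem card_crossingEdges_singleton_left (a : α) (S : Finset α) :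
    #(G.crossingEdges {a} S) = #(S.filter (G.Adj a)) := by
  rw [crossingEdges_singleton_left,
    card_image_of_injective _ fun _ _ => Sym2.congr_right.1]

theorem card_crossingEdges_singleton_right (S : Finset α) (b : α) :
    #(G.crossingEdges S {b}) = #(S.filter (G.Adj b)) := by
  rw [crossingEdges_comm, card_crossingEdges_singleton_left]

end SimpleGraph

open SimpleGraph

open scoped Classical in
theorem cut_card_eq_flips_plus_error_general {α : Type*} [Fintype α] [DecidableEq α]
    (G : SimpleGraph α) [DecidableRel G.Adj]
    (src snk : α) (V : Finset α)
    (hst : src ≠ snk) (hsV : src ∉ V) (htV : snk ∉ V)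
    (hadj : ¬ G.Adj src snk)
    (y : α → ℝ) (hy : ∀ v ∈ V, y v = 0 ∨ y v = 1) :
    (G.edgeFinset.filter (fun e =>
        ∃ u ∈ insert src (V.filter (fun v => y v = 1)),
        ∃ w ∈ insert snk (V.filter (fun v => y v = 0)), e = s(u, w))).card =
    (V.filter (fun v => G.Adj src v ∧ y v = 0)).card
      + (V.filter (fun v => G.Adj snk v ∧ y v = 1)).card
      + (G.edgeFinset.filter (fun e =>
          ∃ u ∈ V, ∃ w ∈ V, e = s(u, w) ∧ y u ≠ y w)).card := by
  set V₁ := V.filter (fun v => y v = 1)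
  set V₀ := V.filter (fun v => y v = 0)
  change #(G.crossingEdges (insert src V₁) (insert snk V₀)) = _
  rw [insert_eq, insert_eq,
    card_crossingEdges_union_right (by simp [V₁, V₀, htV, hst.symm]),
    card_crossingEdges_union_left (by simp [V₁, hsV, hst]),
    card_crossingEdges_union_left (by simp [V₁, V₀, hsV]),
    card_crossingEdges_singleton_left, card_crossingEdges_singleton_left,
    card_crossingEdges_singleton_right, filter_singleton, if_neg hadj, card_empty, zero_add,
    filter_filter, filter_filter,
    ← crossingEdges_filter_eq_filter_ne one_ne_zero fun v hv => (hy v hv).symm]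
  simp only [and_comm]
  ring

open scoped Classical in
/-- In the reduction graph, the cardinality of the s-t cut induced by a
binary labeling of the non-terminal vertices equals the number of label flips plus
the total error of the unit-weight label-flipping instance. -/
theorem cut_card_eq_flips_plus_error {α : Type*} [Fintype α] [DecidableEq α]
    (G : SimpleGraph α) [DecidableRel G.Adj]
    (src snk : α) (V : Finset α)
    (hst : src ≠ snk) (hsV : src ∉ V) (htV : snk ∉ V)
    (hcover : ∀ x : α, x = src ∨ x = snk ∨ x ∈ V)
    (hadj : ¬ G.Adj src snk)
    (hone : ∀ v ∈ V, ¬ (G.Adj src v ∧ G.Adj snk v))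
    (y : α → ℝ) (hy : ∀ v ∈ V, y v = 0 ∨ y v = 1) :
    (G.edgeFinset.filter (fun e =>
        ∃ u ∈ insert src (V.filter (fun v => y v = 1)),
        ∃ w ∈ insert snk (V.filter (fun v => y v = 0)), e = s(u, w))).card =
    (V.filter (fun v => G.Adj src v ∧ y v = 0)).card
      + (V.filter (fun v => G.Adj snk v ∧ y v = 1)).card
      + (G.edgeFinset.filter (fun e =>
          ∃ u ∈ V, ∃ w ∈ V, e = s(u, w) ∧ y u ≠ y w)).card :=
  cut_card_eq_flips_plus_error_general G src snk V hst hsV htV hadj y hy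
end

section
/- Let n ∈ ℕ, let W : Fin n → Fin n → ℝ be a symmetric matrix with nonnegative entries, let y' : Fin n → ℝ take values in {0,1}, and let m ≥ 0. Suppose y* : Fin n → ℝ minimizes the objective Σ_i |y i − y' i| over the LP feasible set {y : ∀ i, y i ∈ [0,1] and Σ_i Σ_j W i j * |y i − y j| ≤ m}. Then there exists ŷ in the LP feasible set with the same objective value as y* (hence also a minimizer) and a real α ∈ (0,1) such that every component of ŷ lies in the set {0, α, 1}. -/
open Finset


lemma tel_aux (f : ℕ → ℝ) (p q : ℕ) (h : p ≤ q) :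
    ∑ j ∈ Finset.Ioc p q, (f j - f (j-1)) = f q - f p := by
  induction q, h using Nat.le_induction with
  | base => simp
  | succ q hq ih =>
      rw [← Nat.succ_eq_add_one, Finset.sum_Ioc_succ_top hq, ih]
      simp [Nat.succ_sub_one]


lemma sel (K : Finset ℕ) (μ f g : ℕ → ℝ) (c m : ℝ)
    (hμ : ∀ j ∈ K, 0 ≤ μ j) (hs : ∑ j ∈ K, μ j = 1)
    (hf : ∑ j ∈ K, μ j * f j = c) (hg : ∑ j ∈ K, μ j * g j ≤ m)
    (hopt : ∀ j ∈ K, g j ≤ m → c ≤ f j) :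
    ∃ a ∈ K, ∃ b ∈ K, ∃ l : ℝ, 0 ≤ l ∧ l ≤ 1 ∧
      l * f a + (1 - l) * f b = c ∧ l * g a + (1 - l) * g b ≤ m := by
  by_cases he : ∃ j ∈ K, g j ≤ m ∧ f j ≤ c
  · obtain ⟨j, hj, hgj, hfj⟩ := he
    refine ⟨j, hj, j, hj, 1, by norm_num, by norm_num, ?_, by simpa using hgj⟩
    have := hopt j hj hgj
    have : f j = c := le_antisymm hfj this
    simp [this]
  push_neg at he
  -- he : ∀ j ∈ K, g j ≤ m → c < f j
  have he' : ∀ j ∈ K, f j ≤ c → m < g j := by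
    intro j hj hfj
    by_contra h
    push_neg at h
    exact absurd hfj (not_le.mpr (he j hj h))
  set L := K.filter (fun j => 0 < μ j ∧ f j < c) with hL
  set R := K.filter (fun j => 0 < μ j ∧ c < f j) with hR
  have hLsub : L ⊆ K := Finset.filter_subset _ _
  have hRsub : R ⊆ K := Finset.filter_subset _ _
  have hdisj : Disjoint L R := by
    rw [Finset.disjoint_left]
    intro j hjL hjR
    rw [hL, Finset.mem_filter] at hjL
    rw [hR, Finset.mem_filter] at hjR
    linarith [hjL.2.2, hjR.2.2]
  have hLR_sub : L ∪ R ⊆ K := Finset.union_subset hLsub hRsub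
  have key : ∀ j ∈ K, j ∉ L ∪ R → μ j * (f j - c) = 0 ∧ 0 ≤ μ j * (g j - m) := by
    intro j hj hnot
    rw [Finset.mem_union, not_or] at hnot
    rcases (hμ j hj).lt_or_eq with hpos | hzero
    · have h1 : ¬ (f j < c) := by
        intro h; exact hnot.1 (Finset.mem_filter.mpr ⟨hj, hpos, h⟩)
      have h2 : ¬ (c < f j) := by
        intro h; exact hnot.2 (Finset.mem_filter.mpr ⟨hj, hpos, h⟩)
      have hfc : f j = c := le_antisymm (not_lt.mp h2) (not_lt.mp h1)
      have := he' j hj (le_of_eq hfc)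
      constructor
      · rw [hfc]; ring
      · nlinarith
    · constructor <;> simp [← hzero]
  have hbal0 : ∑ j ∈ K, μ j * (f j - c) = 0 := by
    have : ∑ j ∈ K, μ j * (f j - c) = (∑ j ∈ K, μ j * f j) - (∑ j ∈ K, μ j) * c := by
      rw [Finset.sum_mul, ← Finset.sum_sub_distrib]
      apply Finset.sum_congr rfl; intro j _; ring
    rw [this, hf, hs]; ring
  have hgm0 : ∑ j ∈ K, μ j * (g j - m) ≤ 0 := by
    have : ∑ j ∈ K, μ j * (g j - m) = (∑ j ∈ K, μ j * g j) - (∑ j ∈ K, μ j) * m := by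
      rw [Finset.sum_mul, ← Finset.sum_sub_distrib]
      apply Finset.sum_congr rfl; intro j _; ring
    rw [this, hs]; linarith
  have hbal2 : ∑ j ∈ L ∪ R, μ j * (f j - c) = 0 := by
    rw [Finset.sum_subset hLR_sub (fun j hj hnot => (key j hj hnot).1), hbal0]
  have hgm2 : ∑ j ∈ L ∪ R, μ j * (g j - m) ≤ 0 := by
    calc ∑ j ∈ L ∪ R, μ j * (g j - m) ≤ ∑ j ∈ K, μ j * (g j - m) :=
          Finset.sum_le_sum_of_subset_of_nonneg hLR_sub (fun j hj hnot => (key j hj hnot).2)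
      _ ≤ 0 := hgm0
  -- get some positive mass point
  have hex : ∃ j ∈ K, 0 < μ j := by
    by_contra h
    push_neg at h
    have : ∑ j ∈ K, μ j ≤ 0 := Finset.sum_nonpos h
    linarith
  -- L and R nonempty
  have hRposterm : ∀ j ∈ R, 0 < μ j * (f j - c) := by
    intro j hj
    rw [hR, Finset.mem_filter] at hj
    have := hj.2.1; have := hj.2.2
    nlinarith
  have hLposterm : ∀ j ∈ L, 0 < μ j * (c - f j) := by
    intro j hj
    rw [hL, Finset.mem_filter] at hj
    have := hj.2.1; have := hj.2.2
    nlinarith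
  have hcontra : ¬ (L = ∅ ∧ R = ∅) := by
    rintro ⟨hLe, hRe⟩
    obtain ⟨j₀, hj₀, hμ₀⟩ := hex
    have hnot : j₀ ∉ L ∪ R := by simp [hLe, hRe]
    have hfc : f j₀ = c := by
      have := (key j₀ hj₀ hnot).1
      rcases mul_eq_zero.mp this with h | h
      · linarith
      · linarith
    have hgj : m < g j₀ := he' j₀ hj₀ (le_of_eq hfc)
    have hpos : 0 < μ j₀ * (g j₀ - m) := by nlinarith
    have : μ j₀ * (g j₀ - m) ≤ ∑ j ∈ K, μ j * (g j - m) := by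
      apply Finset.single_le_sum _ hj₀
      intro j hj
      by_cases hjin : j ∈ L ∪ R
      · exfalso; rw [Finset.mem_union] at hjin
        rcases hjin with h | h
        · rw [hLe] at h; exact absurd h (Finset.notMem_empty j)
        · rw [hRe] at h; exact absurd h (Finset.notMem_empty j)
      · exact (key j hj hjin).2
    linarith
  have hLne : L.Nonempty := by
    rw [Finset.nonempty_iff_ne_empty]
    intro hLe
    have hRe : R = ∅ := by
      by_contra hRne
      rw [← Ne, ← Finset.nonempty_iff_ne_empty] at hRne
      have hsum : ∑ j ∈ R, μ j * (f j - c) = 0 := by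
        have := hbal2
        rw [hLe] at this; simpa using this
      have : 0 < ∑ j ∈ R, μ j * (f j - c) := Finset.sum_pos hRposterm hRne
      linarith
    exact hcontra ⟨hLe, hRe⟩
  have hRne : R.Nonempty := by
    rw [Finset.nonempty_iff_ne_empty]
    intro hRe
    have hLe : L = ∅ := by
      by_contra hLne'
      rw [← Ne, ← Finset.nonempty_iff_ne_empty] at hLne'
      have hsum : ∑ j ∈ L, μ j * (f j - c) = 0 := by
        have := hbal2
        rw [hRe] at this; simpa using this
      have hneg : ∑ j ∈ L, μ j * (f j - c) < 0 := by
        apply Finset.sum_neg _ hLne'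
        intro j hj
        have := hLposterm j hj
        nlinarith
      linarith
    exact hcontra ⟨hLe, hRe⟩
  -- minimizers
  obtain ⟨a, haL, ha⟩ := L.exists_min_image (fun j => (g j - m) / (c - f j)) hLne
  obtain ⟨b, hbR, hb⟩ := R.exists_min_image (fun j => (g j - m) / (f j - c)) hRne
  have haK := hLsub haL
  have hbK := hRsub hbR
  have hfa : f a < c := (Finset.mem_filter.mp haL).2.2
  have hfb : c < f b := (Finset.mem_filter.mp hbR).2.2
  set sa := (g a - m) / (c - f a) with hsa
  set tb := (g b - m) / (f b - c) with htb
  set B := ∑ j ∈ R, μ j * (f j - c) with hBdef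
  have hBpos : 0 < B := Finset.sum_pos hRposterm hRne
  have hBL : ∑ j ∈ L, μ j * (c - f j) = B := by
    have h1 : ∑ j ∈ L, μ j * (f j - c) + ∑ j ∈ R, μ j * (f j - c) = 0 := by
      rw [← Finset.sum_union hdisj]; exact hbal2
    have h2 : ∑ j ∈ L, μ j * (c - f j) = - ∑ j ∈ L, μ j * (f j - c) := by
      rw [← Finset.sum_neg_distrib]
      apply Finset.sum_congr rfl; intro j _; ring
    rw [h2]; linarith
  -- core bounds
  have hLb : B * sa ≤ ∑ j ∈ L, μ j * (g j - m) := by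
    calc B * sa = ∑ j ∈ L, μ j * (c - f j) * sa := by rw [← hBL, Finset.sum_mul]
      _ ≤ ∑ j ∈ L, μ j * (g j - m) := by
          apply Finset.sum_le_sum
          intro j hj
          have hjf : f j < c := (Finset.mem_filter.mp hj).2.2
          have hjμ : 0 < μ j := (Finset.mem_filter.mp hj).2.1
          have hle := ha j hj
          have hne : c - f j ≠ 0 := by linarith
          have heq : μ j * (c - f j) * ((g j - m) / (c - f j)) = μ j * (g j - m) := by
            field_simp
          calc μ j * (c - f j) * sa ≤ μ j * (c - f j) * ((g j - m) / (c - f j)) := by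
                apply mul_le_mul_of_nonneg_left hle
                nlinarith
            _ = μ j * (g j - m) := heq
  have hRb : B * tb ≤ ∑ j ∈ R, μ j * (g j - m) := by
    calc B * tb = ∑ j ∈ R, μ j * (f j - c) * tb := by rw [Finset.sum_mul]
      _ ≤ ∑ j ∈ R, μ j * (g j - m) := by
          apply Finset.sum_le_sum
          intro j hj
          have hjf : c < f j := (Finset.mem_filter.mp hj).2.2
          have hjμ : 0 < μ j := (Finset.mem_filter.mp hj).2.1
          have hle := hb j hj
          have hne : f j - c ≠ 0 := by linarith
          have heq : μ j * (f j - c) * ((g j - m) / (f j - c)) = μ j * (g j - m) := by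
            field_simp
          calc μ j * (f j - c) * tb ≤ μ j * (f j - c) * ((g j - m) / (f j - c)) := by
                apply mul_le_mul_of_nonneg_left hle
                nlinarith
            _ = μ j * (g j - m) := heq
  have hsum_st : sa + tb ≤ 0 := by
    have hsplit : ∑ j ∈ L, μ j * (g j - m) + ∑ j ∈ R, μ j * (g j - m) ≤ 0 := by
      rw [← Finset.sum_union hdisj]; exact hgm2
    have : B * (sa + tb) ≤ 0 := by nlinarith
    nlinarith
  -- construct λ
  set l := (f b - c) / (f b - f a) with hl
  have hD : 0 < f b - f a := by linarith
  have hl0 : 0 ≤ l := div_nonneg (by linarith) (le_of_lt hD)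
  have hl1 : l ≤ 1 := by
    rw [hl, div_le_one hD]; linarith
  refine ⟨a, haK, b, hbK, l, hl0, hl1, ?_, ?_⟩
  · rw [hl]; field_simp; ring
  · have e1 : g a - m = sa * (c - f a) := by
      have hne : c - f a ≠ 0 := ne_of_gt (by linarith)
      rw [hsa, div_mul_cancel₀ _ hne]
    have e2 : g b - m = tb * (f b - c) := by
      have hne : f b - c ≠ 0 := ne_of_gt (by linarith)
      rw [htb, div_mul_cancel₀ _ hne]
    have hnum : (f b - c) * (g a - m) + (c - f a) * (g b - m) ≤ 0 := by
      rw [e1, e2]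
      have hprod : 0 < (c - f a) * (f b - c) := by nlinarith
      nlinarith
    have heq : l * g a + (1 - l) * g b - m =
        ((f b - c) * (g a - m) + (c - f a) * (g b - m)) / (f b - f a) := by
      rw [hl]; field_simp; ring
    have : l * g a + (1 - l) * g b - m ≤ 0 := by
      rw [heq]
      exact div_nonpos_of_nonpos_of_nonneg hnum (le_of_lt hD)
    linarith


lemma abs3 (a b t l : ℝ) (ha : a = 0 ∨ a = 1) (hb : b = 0 ∨ b = 1) (ht : t = 0 ∨ t = 1)
    (h0 : 0 ≤ l) (h1 : l ≤ 1) :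
    |l*a + (1-l)*b - t| = l*|a-t| + (1-l)*|b-t| := by
  rcases ha with rfl|rfl <;> rcases hb with rfl|rfl <;> rcases ht with rfl|rfl <;>
    norm_num <;> first
      | linarith
      | (rw [abs_of_nonpos (by linarith : l - 1 ≤ (0:ℝ))]; ring)

lemma combine (n : ℕ) (W : Fin n → Fin n → ℝ) (hWnonneg : ∀ i j, 0 ≤ W i j)
    (y' : Fin n → ℝ) (hy' : ∀ i, y' i = 0 ∨ y' i = 1) (m c : ℝ)
    (p q : Fin n → ℝ) (hp : ∀ i, p i = 0 ∨ p i = 1) (hq : ∀ i, q i = 0 ∨ q i = 1)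
    (hpq : ∀ i, q i ≤ p i)
    (l : ℝ) (hl0 : 0 ≤ l) (hl1 : l ≤ 1)
    (hobj : l * (∑ i, |p i - y' i|) + (1 - l) * (∑ i, |q i - y' i|) = c)
    (herr : l * (∑ i, ∑ j, W i j * |p i - p j|) + (1 - l) * (∑ i, ∑ j, W i j * |q i - q j|) ≤ m) :
    ∃ (yhat : Fin n → ℝ) (α : ℝ), α ∈ Set.Ioo (0:ℝ) 1 ∧
      (∀ i, yhat i ∈ Set.Icc (0:ℝ) 1) ∧
      (∑ i, ∑ j, W i j * |yhat i - yhat j| ≤ m) ∧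
      (∑ i, |yhat i - y' i| = c) ∧
      (∀ i, yhat i = 0 ∨ yhat i = α ∨ yhat i = 1) := by
  set yhat : Fin n → ℝ := fun i => l * p i + (1 - l) * q i with hyhat
  set α : ℝ := if 0 < l ∧ l < 1 then l else 1/2 with hα
  refine ⟨yhat, α, ?_, ?_, ?_, ?_, ?_⟩
  · rw [hα]
    split_ifs with h
    · exact ⟨h.1, h.2⟩
    · norm_num
  · intro i
    rcases hp i with h1 | h1 <;> rcases hq i with h2 | h2 <;>
      simp [hyhat, h1, h2] <;> constructor <;> linarith
  · calc ∑ i, ∑ j, W i j * |yhat i - yhat j|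
        ≤ ∑ i, ∑ j, (l * (W i j * |p i - p j|) + (1 - l) * (W i j * |q i - q j|)) := by
          apply Finset.sum_le_sum; intro i _
          apply Finset.sum_le_sum; intro j _
          have htri : |yhat i - yhat j| ≤ l * |p i - p j| + (1 - l) * |q i - q j| := by
            have : yhat i - yhat j = l * (p i - p j) + (1 - l) * (q i - q j) := by
              rw [hyhat]; ring
            rw [this]
            calc |l * (p i - p j) + (1 - l) * (q i - q j)|
                ≤ |l * (p i - p j)| + |(1 - l) * (q i - q j)| := abs_add_le _ _
              _ = l * |p i - p j| + (1 - l) * |q i - q j| := by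
                  rw [abs_mul, abs_mul, abs_of_nonneg hl0, abs_of_nonneg (by linarith : (0:ℝ) ≤ 1 - l)]
          calc W i j * |yhat i - yhat j| ≤ W i j * (l * |p i - p j| + (1 - l) * |q i - q j|) :=
                mul_le_mul_of_nonneg_left htri (hWnonneg i j)
            _ = l * (W i j * |p i - p j|) + (1 - l) * (W i j * |q i - q j|) := by ring
      _ = l * (∑ i, ∑ j, W i j * |p i - p j|) + (1 - l) * (∑ i, ∑ j, W i j * |q i - q j|) := by
          rw [Finset.mul_sum, Finset.mul_sum, ← Finset.sum_add_distrib]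
          apply Finset.sum_congr rfl; intro i _
          rw [Finset.mul_sum, Finset.mul_sum, ← Finset.sum_add_distrib]
      _ ≤ m := herr
  · calc ∑ i, |yhat i - y' i|
        = ∑ i, (l * |p i - y' i| + (1 - l) * |q i - y' i|) := by
          apply Finset.sum_congr rfl; intro i _
          simpa only [hyhat] using abs3 (p i) (q i) (y' i) l (hp i) (hq i) (hy' i) hl0 hl1
      _ = c := by
          rw [Finset.sum_add_distrib, ← Finset.mul_sum, ← Finset.mul_sum, hobj]
  · intro i
    rcases hp i with h1 | h1 <;> rcases hq i with h2 | h2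
    · left; simp [hyhat, h1, h2]
    · exfalso; have := hpq i; rw [h1, h2] at this; linarith
    · -- p = 1, q = 0 : value l
      have hv : yhat i = l := by simp [hyhat, h1, h2]
      rcases lt_or_eq_of_le hl0 with hl0' | hl0'
      · rcases lt_or_eq_of_le hl1 with hl1' | hl1'
        · right; left; rw [hv, hα, if_pos ⟨hl0', hl1'⟩]
        · right; right; rw [hv, hl1']
      · left; rw [hv, ← hl0']
    · right; right; simp [hyhat, h1, h2]

/-- Lemma 2: Any optimal LP solution can be converted into an optimal
solution all of whose components lie in {0, α, 1} for some α ∈ (0,1). -/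
theorem lp_opt_three_valued (n : ℕ) (W : Fin n → Fin n → ℝ)
    (hWsymm : ∀ i j, W i j = W j i) (hWnonneg : ∀ i j, 0 ≤ W i j)
    (y' : Fin n → ℝ) (hy' : ∀ i, y' i = 0 ∨ y' i = 1)
    (m : ℝ) (hm : 0 ≤ m)
    (ystar : Fin n → ℝ)
    (hfeas1 : ∀ i, ystar i ∈ Set.Icc (0:ℝ) 1)
    (hfeas2 : ∑ i, ∑ j, W i j * |ystar i - ystar j| ≤ m)
    (hopt : ∀ y : Fin n → ℝ, (∀ i, y i ∈ Set.Icc (0:ℝ) 1) →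
      ∑ i, ∑ j, W i j * |y i - y j| ≤ m →
      ∑ i, |ystar i - y' i| ≤ ∑ i, |y i - y' i|) :
    ∃ (yhat : Fin n → ℝ) (α : ℝ), α ∈ Set.Ioo (0:ℝ) 1 ∧
      (∀ i, yhat i ∈ Set.Icc (0:ℝ) 1) ∧
      (∑ i, ∑ j, W i j * |yhat i - yhat j| ≤ m) ∧
      (∑ i, |yhat i - y' i| = ∑ i, |ystar i - y' i|) ∧
      (∀ i, yhat i = 0 ∨ yhat i = α ∨ yhat i = 1) := by
  classical
  set T : Finset ℝ := insert 0 (insert 1 (Finset.image ystar Finset.univ)) with hT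
  set s : List ℝ := T.sort (· ≤ ·) with hs
  set M : ℕ := T.card with hMdef
  have hlen : s.length = M := Finset.length_sort _
  have h0T : (0:ℝ) ∈ T := by simp [hT]
  have h1T : (1:ℝ) ∈ T := by simp [hT]
  have hystarT : ∀ i, ystar i ∈ T := by
    intro i; rw [hT]
    exact Finset.mem_insert_of_mem (Finset.mem_insert_of_mem
      (Finset.mem_image_of_mem _ (Finset.mem_univ i)))
  have hTbound : ∀ x ∈ T, 0 ≤ x ∧ x ≤ 1 := by
    intro x hx
    rw [hT] at hx
    simp only [Finset.mem_insert, Finset.mem_image, Finset.mem_univ, true_and] at hx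
    rcases hx with rfl | rfl | ⟨i, rfl⟩
    · norm_num
    · norm_num
    · exact ⟨(hfeas1 i).1, (hfeas1 i).2⟩
  have hM2 : 2 ≤ M := by
    rw [hMdef]
    exact Finset.one_lt_card.mpr ⟨0, h0T, 1, h1T, by norm_num⟩
  set V : ℕ → ℝ := fun j => s.getD j 1 with hV
  have hVget : ∀ {j : ℕ} (h : j < M), V j = s.get ⟨j, by rw [hlen]; exact h⟩ := by
    intro j h
    rw [hV]
    exact List.getD_eq_get (l := s) (d := 1) ⟨j, by rw [hlen]; exact h⟩
  have hVlt : ∀ {j k : ℕ}, j < k → k < M → V j < V k := by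
    intro j k hjk hk
    have hj : j < M := lt_trans hjk hk
    rw [hVget hj, hVget hk]
    exact (Finset.sortedLT_sort T).pairwise.rel_get_of_lt (by exact hjk)
  have hVle : ∀ {j k : ℕ}, j < M → k < M → (V j ≤ V k ↔ j ≤ k) := by
    intro j k hj hk
    constructor
    · intro h
      by_contra hc
      push_neg at hc
      exact absurd h (not_le.mpr (hVlt hc hj))
    · intro h
      rcases h.lt_or_eq with h' | h'
      · exact le_of_lt (hVlt h' hk)
      · rw [h']
  have hV0 : V 0 = 0 := by
    have h0 : 0 < s.length := by rw [hlen]; omega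
    rw [hVget (show 0 < M by omega), List.get_eq_getElem]
    rw [Finset.sorted_zero_eq_min' (h := h0)]
    exact le_antisymm (Finset.min'_le T 0 h0T)
      (Finset.le_min' _ _ _ (fun x hx => (hTbound x hx).1))
  have hV1 : V (M - 1) = 1 := by
    have h0 : s.length - 1 < s.length := by rw [hlen]; omega
    have : (⟨M - 1, by rw [hlen]; omega⟩ : Fin s.length) = ⟨s.length - 1, h0⟩ := by
      congr 1; rw [hlen]
    rw [hVget (show M - 1 < M by omega), this, List.get_eq_getElem]
    rw [Finset.sorted_last_eq_max' (h := h0)]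
    exact le_antisymm (Finset.max'_le _ _ _ (fun x hx => (hTbound x hx).2))
      (Finset.le_max' T 1 h1T)
  have hVidx : ∀ x ∈ T, ∃ p, p < M ∧ V p = x := by
    intro x hx
    have hxs : x ∈ s := by rw [hs]; exact (Finset.mem_sort _).mpr hx
    obtain ⟨⟨p, hp⟩, hget⟩ := List.mem_iff_get.mp hxs
    have hpM : p < M := by rw [← hlen]; exact hp
    exact ⟨p, hpM, by rw [hVget hpM]; exact hget⟩
  set u : ℕ → ℝ → ℝ := fun j x => if V j ≤ x then 1 else 0 with hu
  set μ : ℕ → ℝ := fun j => V j - V (j - 1) with hμdef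
  set K : Finset ℕ := Finset.Ico 1 M with hK
  have hKIoc : K = Finset.Ioc 0 (M - 1) := by
    rw [hK]; ext j; simp only [Finset.mem_Ico, Finset.mem_Ioc]; omega
  have hμsum : ∑ j ∈ K, μ j = 1 := by
    rw [hKIoc]
    simp only [hμdef]
    rw [tel_aux V 0 (M - 1) (by omega), hV0, hV1]; ring
  have hμnn : ∀ j ∈ K, 0 ≤ μ j := by
    intro j hj
    rw [hK, Finset.mem_Ico] at hj
    have := hVlt (show j - 1 < j by omega) hj.2
    simp only [hμdef]; linarith
  have I2' : ∀ x ∈ T, ∀ y ∈ T, y ≤ x → ∑ j ∈ K, μ j * |u j x - u j y| = x - y := by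
    intro x hx y hy hyx
    obtain ⟨q, hq, hVq⟩ := hVidx x hx
    obtain ⟨p, hp, hVp⟩ := hVidx y hy
    have hpq : p ≤ q := by
      apply (hVle hp hq).mp; rw [hVp, hVq]; exact hyx
    have hstep : ∀ j ∈ K, μ j * |u j x - u j y| = if j ∈ Finset.Ioc p q then μ j else 0 := by
      intro j hj
      rw [hK, Finset.mem_Ico] at hj
      have hjM : j < M := hj.2
      have hux : u j x = if j ≤ q then 1 else 0 := by
        simp only [hu]; rw [← hVq]
        by_cases h : j ≤ q
        · rw [if_pos h, if_pos ((hVle hjM hq).mpr h)]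
        · rw [if_neg h, if_neg (fun hc => h ((hVle hjM hq).mp hc))]
      have huy : u j y = if j ≤ p then 1 else 0 := by
        simp only [hu]; rw [← hVp]
        by_cases h : j ≤ p
        · rw [if_pos h, if_pos ((hVle hjM hp).mpr h)]
        · rw [if_neg h, if_neg (fun hc => h ((hVle hjM hp).mp hc))]
      rw [hux, huy]; simp only [Finset.mem_Ioc]
      by_cases h1 : j ≤ p
      · have h2 : j ≤ q := le_trans h1 hpq
        rw [if_pos h1, if_pos h2, if_neg (by omega)]; simp
      · by_cases h2 : j ≤ q
        · rw [if_neg h1, if_pos h2, if_pos ⟨by omega, h2⟩]; simp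
        · rw [if_neg h1, if_neg h2, if_neg (by omega)]; simp
    calc ∑ j ∈ K, μ j * |u j x - u j y|
        = ∑ j ∈ K, (if j ∈ Finset.Ioc p q then μ j else 0) := Finset.sum_congr rfl hstep
      _ = ∑ j ∈ K ∩ Finset.Ioc p q, μ j := Finset.sum_ite_mem _ _ _
      _ = ∑ j ∈ Finset.Ioc p q, μ j := by
          congr 1
          rw [Finset.inter_eq_right]
          intro j hj
          rw [Finset.mem_Ioc] at hj
          rw [hK, Finset.mem_Ico]
          omega
      _ = V q - V p := by simp only [hμdef]; exact tel_aux V p q hpq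
      _ = x - y := by rw [hVq, hVp]
  have I2 : ∀ x ∈ T, ∀ y ∈ T, ∑ j ∈ K, μ j * |u j x - u j y| = |x - y| := by
    intro x hx y hy
    rcases le_total y x with h | h
    · rw [I2' x hx y hy h, abs_of_nonneg (by linarith)]
    · calc ∑ j ∈ K, μ j * |u j x - u j y| = ∑ j ∈ K, μ j * |u j y - u j x| := by
            apply Finset.sum_congr rfl; intro j _; rw [abs_sub_comm]
        _ = y - x := I2' y hy x hx h
        _ = |x - y| := by rw [abs_sub_comm, abs_of_nonneg (by linarith)]
  set f : ℕ → ℝ := fun j => ∑ i, |u j (ystar i) - y' i| with hfdef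
  set g : ℕ → ℝ := fun j => ∑ i, ∑ l, W i l * |u j (ystar i) - u j (ystar l)| with hgdef
  set c : ℝ := ∑ i, |ystar i - y' i| with hcdef
  have huy' : ∀ j ∈ K, ∀ i, u j (y' i) = y' i := by
    intro j hj i
    rw [hK, Finset.mem_Ico] at hj
    rcases hy' i with h | h
    · rw [h]
      simp only [hu]
      rw [if_neg]
      rw [← hV0]
      exact not_le.mpr (hVlt hj.1 hj.2)
    · rw [h]
      simp only [hu]
      rw [if_pos]
      rw [← hV1]
      exact (hVle hj.2 (by omega)).mpr (by omega)
  have hy'T : ∀ i, y' i ∈ T := by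
    intro i
    rcases hy' i with h | h <;> rw [h]
    exacts [h0T, h1T]
  have hfsum : ∑ j ∈ K, μ j * f j = c := by
    rw [hcdef]
    calc ∑ j ∈ K, μ j * f j = ∑ j ∈ K, ∑ i, μ j * |u j (ystar i) - y' i| := by
          apply Finset.sum_congr rfl; intro j _
          simp only [hfdef]
          exact Finset.mul_sum _ _ _
      _ = ∑ i, ∑ j ∈ K, μ j * |u j (ystar i) - y' i| := Finset.sum_comm
      _ = ∑ i, |ystar i - y' i| := by
          apply Finset.sum_congr rfl; intro i _
          have hcongr : ∀ j ∈ K, μ j * |u j (ystar i) - y' i|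
              = μ j * |u j (ystar i) - u j (y' i)| := by
            intro j hj; rw [huy' j hj i]
          rw [Finset.sum_congr rfl hcongr]
          exact I2 (ystar i) (hystarT i) (y' i) (hy'T i)
  have hgsum : ∑ j ∈ K, μ j * g j ≤ m := by
    have heq : ∑ j ∈ K, μ j * g j = ∑ i, ∑ l, W i l * |ystar i - ystar l| := by
      calc ∑ j ∈ K, μ j * g j
          = ∑ j ∈ K, ∑ i, ∑ l, W i l * (μ j * |u j (ystar i) - u j (ystar l)|) := by
            apply Finset.sum_congr rfl; intro j _
            simp only [hgdef]
            rw [Finset.mul_sum]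
            apply Finset.sum_congr rfl; intro i _
            rw [Finset.mul_sum]
            apply Finset.sum_congr rfl; intro l _
            ring
        _ = ∑ i, ∑ j ∈ K, ∑ l, W i l * (μ j * |u j (ystar i) - u j (ystar l)|) :=
            Finset.sum_comm
        _ = ∑ i, ∑ l, ∑ j ∈ K, W i l * (μ j * |u j (ystar i) - u j (ystar l)|) := by
            apply Finset.sum_congr rfl; intro i _
            exact Finset.sum_comm
        _ = ∑ i, ∑ l, W i l * |ystar i - ystar l| := by
            apply Finset.sum_congr rfl; intro i _
            apply Finset.sum_congr rfl; intro l _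
            rw [← Finset.mul_sum, I2 (ystar i) (hystarT i) (ystar l) (hystarT l)]
    rw [heq]
    exact hfeas2
  have hoptK : ∀ j ∈ K, g j ≤ m → c ≤ f j := by
    intro j hj hgj
    rw [hcdef]
    simp only [hfdef]
    apply hopt (fun i => u j (ystar i))
    · intro i
      simp only [hu]
      split_ifs <;> norm_num
    · simpa [hgdef] using hgj
  obtain ⟨a, haK, b, hbK, l, hl0, hl1, hlf, hlg⟩ :=
    sel K μ f g c m hμnn hμsum hfsum hgsum hoptK
  have hpval : ∀ (k : ℕ) (i : Fin n), u k (ystar i) = 0 ∨ u k (ystar i) = 1 := by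
    intro k i
    simp only [hu]
    split_ifs <;> simp
  rcases le_total (V a) (V b) with hab | hab
  · obtain ⟨yhat, α, hα, hbox, herr, hobj, hval⟩ := combine n W hWnonneg y' hy' m c
      (fun i => u a (ystar i)) (fun i => u b (ystar i))
      (fun i => hpval a i) (fun i => hpval b i)
      (fun i => by
        simp only [hu]
        split_ifs with h1 h2 <;> linarith)
      l hl0 hl1
      (by rw [hfdef] at hlf; simpa using hlf)
      (by rw [hgdef] at hlg; simpa using hlg)
    exact ⟨yhat, α, hα, hbox, herr, hobj, hval⟩
  · obtain ⟨yhat, α, hα, hbox, herr, hobj, hval⟩ := combine n W hWnonneg y' hy' m c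
      (fun i => u b (ystar i)) (fun i => u a (ystar i))
      (fun i => hpval b i) (fun i => hpval a i)
      (fun i => by
        simp only [hu]
        split_ifs with h1 h2 <;> linarith)
      (1 - l) (by linarith) (by linarith)
      (by
        rw [hfdef] at hlf
        simp only at hlf ⊢
        ring_nf
        ring_nf at hlf
        linarith)
      (by
        rw [hgdef] at hlg
        simp only at hlg ⊢
        ring_nf
        ring_nf at hlg
        linarith)
    exact ⟨yhat, α, hα, hbox, herr, hobj, hval⟩
end

section
/- Let n ∈ ℕ, let W : Fin n → Fin n → ℝ be a symmetric matrix with nonnegative entries, let y' : Fin n → ℝ take values in {0,1}, and let m ≥ 0. Let y be in the LP feasible set {y : ∀ i, y i ∈ [0,1] and Σ_i Σ_j W i j * |y i − y j| ≤ m}, and let α ∈ (0,1) be such that the set S = {i : y i = α} is nonempty, the number of i ∈ S with y' i = 0 equals the number of i ∈ S with y' i = 1 (i.e., N_α = 0), and no j ∉ S with W i j > 0 for some i ∈ S has y j = α. Then there exists t ∈ ({0,1} ∪ {y j : j ∉ S}) with t ≠ α such that the labeling obtained from y by replacing y i with t for every i ∈ S is still in the LP feasible set and has the same objective value Σ_i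 |y i − y' i| as y. -/
open Finset

set_option maxHeartbeats 1000000 in
open scoped Classical in
/-- Lemma 2.1: An α-cluster with N_α = 0 can be moved to another label
value t (one of 0, 1, or a value of a node outside the cluster) while staying
LP-feasible and keeping the same objective value. -/
theorem one_cluster_transform (n : ℕ) (W : Fin n → Fin n → ℝ)
    (hWsymm : ∀ i j, W i j = W j i) (hWnonneg : ∀ i j, 0 ≤ W i j)
    (y' : Fin n → ℝ) (hy' : ∀ i, y' i = 0 ∨ y' i = 1)
    (m : ℝ) (hm : 0 ≤ m)
    (y : Fin n → ℝ)
    (hfeas1 : ∀ i, y i ∈ Set.Icc (0:ℝ) 1)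
    (hfeas2 : ∑ i, ∑ j, W i j * |y i - y j| ≤ m)
    (α : ℝ) (hα : α ∈ Set.Ioo (0:ℝ) 1)
    (hS : ∃ i, y i = α)
    (hN : (Finset.univ.filter (fun i => y i = α ∧ y' i = 0)).card
        = (Finset.univ.filter (fun i => y i = α ∧ y' i = 1)).card)
    (hnbr : ∀ j, y j ≠ α → (∃ i, y i = α ∧ W i j > 0) → y j ≠ α) :
    ∃ t : ℝ, (t = 0 ∨ t = 1 ∨ ∃ j, y j ≠ α ∧ y j = t) ∧ t ≠ α ∧
      (∀ i, (if y i = α then t else y i) ∈ Set.Icc (0:ℝ) 1) ∧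
      (∑ i, ∑ j, W i j *
        |(if y i = α then t else y i) - (if y j = α then t else y j)| ≤ m) ∧
      (∑ i, |(if y i = α then t else y i) - y' i| = ∑ i, |y i - y' i|) := by
  obtain ⟨hα0, hα1⟩ := hα
  -- candidate set
  set C : Finset ℝ := insert 0 (insert 1 ((Finset.univ.filter (fun j => y j ≠ α)).image y))
    with hCdef
  have h0C : (0:ℝ) ∈ C := by simp [hCdef]
  have h1C : (1:ℝ) ∈ C := by simp [hCdef]
  have hCmem : ∀ c ∈ C, c = 0 ∨ c = 1 ∨ ∃ j, y j ≠ α ∧ y j = c := by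
    intro c hc
    simp only [hCdef, Finset.mem_insert, Finset.mem_image, Finset.mem_filter,
      Finset.mem_univ, true_and] at hc
    rcases hc with h | h | ⟨j, hj1, hj2⟩
    · exact Or.inl h
    · exact Or.inr (Or.inl h)
    · exact Or.inr (Or.inr ⟨j, hj1, hj2⟩)
  have hyC : ∀ j, y j ≠ α → y j ∈ C := by
    intro j hj
    simp only [hCdef, Finset.mem_insert, Finset.mem_image, Finset.mem_filter,
      Finset.mem_univ, true_and]
    exact Or.inr (Or.inr ⟨j, hj, rfl⟩)
  -- L and R : nearest candidates below / above α
  have hCLne : (C.filter (fun c => c < α)).Nonempty :=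
    ⟨0, Finset.mem_filter.2 ⟨h0C, hα0⟩⟩
  have hCRne : (C.filter (fun c => α < c)).Nonempty :=
    ⟨1, Finset.mem_filter.2 ⟨h1C, hα1⟩⟩
  set L := (C.filter (fun c => c < α)).max' hCLne with hLdef
  set R := (C.filter (fun c => α < c)).min' hCRne with hRdef
  have hLmem' := (C.filter (fun c => c < α)).max'_mem hCLne
  have hRmem' := (C.filter (fun c => α < c)).min'_mem hCRne
  have hLC : L ∈ C := (Finset.mem_filter.1 hLmem').1
  have hRC : R ∈ C := (Finset.mem_filter.1 hRmem').1
  have hLα : L < α := (Finset.mem_filter.1 hLmem').2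
  have hαR : α < R := (Finset.mem_filter.1 hRmem').2
  have hL0 : (0:ℝ) ≤ L :=
    (C.filter (fun c => c < α)).le_max' 0 (Finset.mem_filter.2 ⟨h0C, hα0⟩)
  have hR1 : R ≤ 1 :=
    (C.filter (fun c => α < c)).min'_le 1 (Finset.mem_filter.2 ⟨h1C, hα1⟩)
  have hLR : L < R := lt_trans hLα hαR
  -- separation: values outside the cluster lie outside (L, R)
  have hsep : ∀ j, y j ≠ α → y j ≤ L ∨ R ≤ y j := by
    intro j hj
    rcases lt_or_gt_of_ne hj with h | h
    · exact Or.inl ((C.filter (fun c => c < α)).le_max' _ (Finset.mem_filter.2 ⟨hyC j hj, h⟩))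
    · exact Or.inr ((C.filter (fun c => α < c)).min'_le _ (Finset.mem_filter.2 ⟨hyC j hj, h⟩))
  -- convex combination coefficients
  set lam := (R - α) / (R - L) with hlamdef
  set mu := (α - L) / (R - L) with hmudef
  have hRLpos : (0:ℝ) < R - L := by linarith
  have hlam0 : 0 ≤ lam := div_nonneg (by linarith) (le_of_lt hRLpos)
  have hmu0 : 0 ≤ mu := div_nonneg (by linarith) (le_of_lt hRLpos)
  have hlammu : lam + mu = 1 := by
    rw [hlamdef, hmudef]; field_simp [ne_of_gt hRLpos] <;> ring
  have hcomb : lam * L + mu * R = α := by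
    rw [hlamdef, hmudef]; field_simp [ne_of_gt hRLpos] <;> ring
  -- affine interpolation of |· - a| on [L, R] when a is outside (L, R)
  have haff : ∀ a : ℝ, (a ≤ L ∨ R ≤ a) → lam * |L - a| + mu * |R - a| = |α - a| := by
    intro a ha
    rcases ha with h | h
    · rw [abs_of_nonneg (by linarith), abs_of_nonneg (by linarith),
        abs_of_nonneg (by linarith)]
      nlinarith [hlammu, hcomb]
    · rw [abs_of_nonpos (by linarith), abs_of_nonpos (by linarith),
        abs_of_nonpos (by linarith)]
      nlinarith [hlammu, hcomb]
  -- termwise interpolation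
  have hterm : ∀ i j : Fin n,
      lam * |(if y i = α then L else y i) - (if y j = α then L else y j)|
        + mu * |(if y i = α then R else y i) - (if y j = α then R else y j)|
        = |y i - y j| := by
    intro i j
    by_cases hi : y i = α <;> by_cases hj : y j = α
    · simp [hi, hj]
    · simp only [hi, hj, if_pos rfl, if_true, if_false]
      exact haff (y j) (hsep j hj)
    · simp only [hi, hj, if_true, if_false]
      rw [abs_sub_comm (y i) α, abs_sub_comm (y i) L, abs_sub_comm (y i) R]
      exact haff (y i) (hsep i hi)
    · simp only [hi, hj, if_false]
      linear_combination |y i - y j| * hlammu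
  -- the total error as a function of t
  set F : ℝ → ℝ := fun t => ∑ i, ∑ j, W i j *
      |(if y i = α then t else y i) - (if y j = α then t else y j)| with hFdef
  have hFcomb : lam * F L + mu * F R = ∑ i, ∑ j, W i j * |y i - y j| := by
    simp only [hFdef, Finset.mul_sum, ← Finset.sum_add_distrib]
    refine Finset.sum_congr rfl fun i _ => Finset.sum_congr rfl fun j _ => ?_
    have := hterm i j
    linear_combination W i j * this
  have hsum : lam * F L + mu * F R ≤ m := hFcomb.trans_le hfeas2
  have hFm : F L ≤ m ∨ F R ≤ m := by
    rcases le_total (F L) (F R) with hle | hle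
    · left
      nlinarith [mul_nonneg hmu0 (sub_nonneg.2 hle)]
    · right
      nlinarith [mul_nonneg hlam0 (sub_nonneg.2 hle)]
  -- objective invariance for any t ∈ [0,1]
  have hobj : ∀ t : ℝ, 0 ≤ t → t ≤ 1 →
      ∑ i, |(if y i = α then t else y i) - y' i| = ∑ i, |y i - y' i| := by
    intro t ht0 ht1
    have key : ∀ s : ℝ, 0 ≤ s → s ≤ 1 →
        ∑ i ∈ Finset.univ.filter (fun i => y i = α), |s - y' i|
          = (Finset.univ.filter (fun i => y i = α ∧ y' i = 0)).card * s
            + (Finset.univ.filter (fun i => y i = α ∧ y' i = 1)).card * (1 - s) := by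
      intro s hs0 hs1
      rw [← Finset.sum_filter_add_sum_filter_not (Finset.univ.filter (fun i => y i = α))
        (fun i => y' i = 0)]
      have e0 : (Finset.univ.filter (fun i => y i = α)).filter (fun i => y' i = 0)
          = Finset.univ.filter (fun i => y i = α ∧ y' i = 0) := by
        rw [Finset.filter_filter]
      have e1 : (Finset.univ.filter (fun i => y i = α)).filter (fun i => ¬ y' i = 0)
          = Finset.univ.filter (fun i => y i = α ∧ y' i = 1) := by
        rw [Finset.filter_filter]
        apply Finset.filter_congr
        intro i _
        rcases hy' i with h | h <;> simp [h]
      rw [e0, e1]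
      have s0 : ∑ i ∈ Finset.univ.filter (fun i => y i = α ∧ y' i = 0), |s - y' i|
          = (Finset.univ.filter (fun i => y i = α ∧ y' i = 0)).card * s := by
        rw [Finset.sum_congr rfl (fun i hi => ?_), Finset.sum_const, nsmul_eq_mul]
        have := (Finset.mem_filter.1 hi).2.2
        rw [this, sub_zero, abs_of_nonneg hs0]
      have s1 : ∑ i ∈ Finset.univ.filter (fun i => y i = α ∧ y' i = 1), |s - y' i|
          = (Finset.univ.filter (fun i => y i = α ∧ y' i = 1)).card * (1 - s) := by
        rw [Finset.sum_congr rfl (fun i hi => ?_), Finset.sum_const, nsmul_eq_mul]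
        have := (Finset.mem_filter.1 hi).2.2
        rw [this, abs_of_nonpos (by linarith), neg_sub]
      rw [s0, s1]
    rw [← Finset.sum_filter_add_sum_filter_not Finset.univ (fun i => y i = α)
        (fun i => |(if y i = α then t else y i) - y' i|),
      ← Finset.sum_filter_add_sum_filter_not Finset.univ (fun i => y i = α)
        (fun i => |y i - y' i|)]
    congr 1
    · have l1 : ∑ i ∈ Finset.univ.filter (fun i => y i = α),
          |(if y i = α then t else y i) - y' i|
          = ∑ i ∈ Finset.univ.filter (fun i => y i = α), |t - y' i| := by
        apply Finset.sum_congr rfl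
        intro i hi
        rw [if_pos (Finset.mem_filter.1 hi).2]
      have l2 : ∑ i ∈ Finset.univ.filter (fun i => y i = α), |y i - y' i|
          = ∑ i ∈ Finset.univ.filter (fun i => y i = α), |α - y' i| := by
        apply Finset.sum_congr rfl
        intro i hi
        rw [(Finset.mem_filter.1 hi).2]
      rw [l1, l2, key t ht0 ht1, key α (le_of_lt hα0) (le_of_lt hα1), hN]
      ring
    · apply Finset.sum_congr rfl
      intro i hi
      rw [if_neg (Finset.mem_filter.1 hi).2]
  have hIcc : ∀ s : ℝ, 0 ≤ s → s ≤ 1 →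
      ∀ i, (if y i = α then s else y i) ∈ Set.Icc (0:ℝ) 1 := by
    intro s hs0 hs1 i
    by_cases hi : y i = α
    · simp only [hi, if_pos rfl]
      exact ⟨hs0, hs1⟩
    · simp only [if_neg hi]
      exact hfeas1 i
  rcases hFm with h | h
  · exact ⟨L, hCmem L hLC, ne_of_lt hLα, hIcc L hL0 (by linarith), h,
      hobj L hL0 (by linarith)⟩
  · exact ⟨R, hCmem R hRC, ne_of_gt hαR, hIcc R (by linarith) hR1, h,
      hobj R (by linarith) hR1⟩
end

section
/- Let n ∈ ℕ, let W : Fin n → Fin n → ℝ be a symmetric matrix with nonnegative entries, let y' : Fin n → ℝ take values in {0,1}, and let m ≥ 0. Let y be in the LP feasible set {y : ∀ i, y i ∈ [0,1] and Σ_i Σ_j W i j * |y i − y j| ≤ m}, and let α, β ∈ (0,1) with α < β be two values taken by y such that, writing S_α = {i : y i = α} and S_β = {i : y i = β}, the quantity N_α = #{i ∈ S_α : y' i = 0} − #{i ∈ S_α : y' i = 1} is nonzero and N_β = #{i ∈ S_β : y' i = 0} − #{i ∈ S_β : y' i = 1} is nonzero. Then there exist α', β' ∈ [0,1] such that the labeling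 y'' obtained from y by replacing all components equal to α with α' and all components equal to β with β' is in the LP feasible set, has the same objective value Σ_i |y i − y' i| as y, and the set of values of y'' lying strictly between 0 and 1 has strictly smaller cardinality than that of y. -/
open Finset

open scoped Classical in
/-- Lemma 2.2: Two clusters with nonzero N_α and N_β can be jointly
shifted to values α', β' ∈ [0,1] preserving feasibility and the objective, while
strictly decreasing the number of distinct values strictly between 0 and 1. -/
theorem two_cluster_transform (n : ℕ) (W : Fin n → Fin n → ℝ)
    (hWsymm : ∀ i j, W i j = W j i) (hWnonneg : ∀ i j, 0 ≤ W i j)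
    (y' : Fin n → ℝ) (hy' : ∀ i, y' i = 0 ∨ y' i = 1)
    (m : ℝ) (hm : 0 ≤ m)
    (y : Fin n → ℝ)
    (hfeas1 : ∀ i, y i ∈ Set.Icc (0:ℝ) 1)
    (hfeas2 : ∑ i, ∑ j, W i j * |y i - y j| ≤ m)
    (α β : ℝ) (hα : α ∈ Set.Ioo (0:ℝ) 1) (hβ : β ∈ Set.Ioo (0:ℝ) 1)
    (hαβ : α < β)
    (hSα : ∃ i, y i = α) (hSβ : ∃ i, y i = β)
    (hNα : ((Finset.univ.filter (fun i => y i = α ∧ y' i = 0)).card : ℤ)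
        - (Finset.univ.filter (fun i => y i = α ∧ y' i = 1)).card ≠ 0)
    (hNβ : ((Finset.univ.filter (fun i => y i = β ∧ y' i = 0)).card : ℤ)
        - (Finset.univ.filter (fun i => y i = β ∧ y' i = 1)).card ≠ 0) :
    ∃ α' β' : ℝ, α' ∈ Set.Icc (0:ℝ) 1 ∧ β' ∈ Set.Icc (0:ℝ) 1 ∧
      (∀ i, (if y i = α then α' else if y i = β then β' else y i) ∈ Set.Icc (0:ℝ) 1) ∧
      (∑ i, ∑ j, W i j *
        |(if y i = α then α' else if y i = β then β' else y i)
          - (if y j = α then α' else if y j = β then β' else y j)| ≤ m) ∧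
      (∑ i, |(if y i = α then α' else if y i = β then β' else y i) - y' i|
        = ∑ i, |y i - y' i|) ∧
      ((Finset.univ.image (fun i => if y i = α then α' else if y i = β then β' else y i)).filter
          (fun v => 0 < v ∧ v < 1)).card
        < ((Finset.univ.image y).filter (fun v => 0 < v ∧ v < 1)).card := by
  classical
  obtain ⟨hα0, hα1⟩ := hα
  obtain ⟨hβ0, hβ1⟩ := hβ
  have hαβ' : α ≠ β := ne_of_lt hαβ
  -- real cluster imbalances
  set Na : ℝ := ((Finset.univ.filter (fun i => y i = α ∧ y' i = 0)).card : ℝ)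
      - ((Finset.univ.filter (fun i => y i = α ∧ y' i = 1)).card : ℝ) with hNadef
  set Nb : ℝ := ((Finset.univ.filter (fun i => y i = β ∧ y' i = 0)).card : ℝ)
      - ((Finset.univ.filter (fun i => y i = β ∧ y' i = 1)).card : ℝ) with hNbdef
  have hNa : Na ≠ 0 := by
    intro h
    apply hNα
    rw [hNadef] at h
    exact_mod_cast h
  have hNb : Nb ≠ 0 := by
    intro h
    apply hNβ
    rw [hNbdef] at h
    exact_mod_cast h
  set r : ℝ := -(Na / Nb) with hrdef
  have hr : r ≠ 0 := by
    rw [hrdef]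
    simp only [ne_eq, neg_eq_zero, div_eq_zero_iff, not_or]
    exact ⟨hNa, hNb⟩
  set c : Fin n → ℝ := fun i => if y i = α then 1 else if y i = β then r else 0 with hcdef
  set z : ℝ → Fin n → ℝ := fun t i => y i + t * c i with hzdef
  have hcy : ∀ i j, y i = y j → c i = c j := by
    intro i j h
    simp only [hcdef, h]
  have hzeq : ∀ t i, z t i = y i + t * c i := fun _ _ => rfl
  have hcα : ∀ i, y i = α → c i = 1 := by
    intro i h
    simp only [hcdef]
    rw [if_pos h]
  have hcβ : ∀ i, y i ≠ α → y i = β → c i = r := by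
    intro i h1 h2
    simp only [hcdef]
    rw [if_neg h1, if_pos h2]
  have hc0 : ∀ i, y i ≠ α → y i ≠ β → c i = 0 := by
    intro i h1 h2
    simp only [hcdef]
    rw [if_neg h1, if_neg h2]
  -- candidate event times
  set Ecand : Finset ℝ :=
    ((Finset.univ ×ˢ Finset.univ : Finset (Fin n × Fin n)).image
      (fun p => (y p.2 - y p.1) / (c p.1 - c p.2)))
    ∪ {-α, 1 - α, -β / r, (1 - β) / r} with hEdef
  have hmem4 : ∀ x : ℝ, x ∈ ({-α, 1 - α, -β / r, (1 - β) / r} : Finset ℝ) → x ∈ Ecand := by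
    intro x hx
    rw [hEdef]
    exact Finset.mem_union_right _ hx
  set P : Finset ℝ := Ecand.filter (fun t => 0 < t) with hPdef
  set Nn : Finset ℝ := Ecand.filter (fun t => t < 0) with hNndef
  have h1αP : (1 - α) ∈ P := by
    rw [hPdef]
    refine Finset.mem_filter.mpr ⟨hmem4 _ ?_, by linarith⟩
    simp
  have hαN : (-α) ∈ Nn := by
    rw [hNndef]
    refine Finset.mem_filter.mpr ⟨hmem4 _ ?_, by linarith⟩
    simp
  have hPne : P.Nonempty := ⟨1 - α, h1αP⟩
  have hNne : Nn.Nonempty := ⟨-α, hαN⟩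
  set tp : ℝ := P.min' hPne with htpdef
  set tn : ℝ := Nn.max' hNne with htndef
  have htp0 : 0 < tp := (Finset.mem_filter.mp (P.min'_mem hPne)).2
  have htn0 : tn < 0 := (Finset.mem_filter.mp (Nn.max'_mem hNne)).2
  have htpE : tp ∈ Ecand := (Finset.mem_filter.mp (P.min'_mem hPne)).1
  have htnE : tn ∈ Ecand := (Finset.mem_filter.mp (Nn.max'_mem hNne)).1
  have htpmin : ∀ x ∈ P, tp ≤ x := fun x hx => P.min'_le x hx
  have htnmax : ∀ x ∈ Nn, x ≤ tn := fun x hx => Nn.le_max' x hx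
  clear_value Na Nb r c z Ecand P Nn tp tn
  have htpa : tp ≤ 1 - α := htpmin _ h1αP
  have htna : -α ≤ tn := htnmax _ hαN
  -- no crossings strictly inside (tn, tp)
  have hcross : ∀ t : ℝ, tn < t → t < tp → ∀ i j, y i ≠ y j → z t i ≠ z t j := by
    intro t ht1 ht2 i j hij heq
    rw [hzeq, hzeq] at heq
    have hcij : c i ≠ c j := by
      intro h
      rw [h] at heq
      exact hij (by linarith)
    have ht : t = (y j - y i) / (c i - c j) := by
      rw [eq_div_iff (sub_ne_zero.mpr hcij)]
      linear_combination heq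
    have htE : t ∈ Ecand := by
      rw [hEdef]
      apply Finset.mem_union_left
      exact Finset.mem_image.mpr ⟨(i, j), by simp, ht.symm⟩
    have ht0 : t ≠ 0 := by
      intro h
      rw [h] at heq
      exact hij (by linarith)
    rcases lt_or_gt_of_ne ht0 with h | h
    · have htm : t ∈ Nn := by
        rw [hNndef]
        exact Finset.mem_filter.mpr ⟨htE, h⟩
      have := htnmax t htm
      linarith
    · have htm : t ∈ P := by
        rw [hPdef]
        exact Finset.mem_filter.mpr ⟨htE, h⟩
      have := htpmin t htm
      linarith
  -- sign constancy on [tn, tp]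
  have hnonneg : ∀ t : ℝ, tn ≤ t → t ≤ tp → ∀ i j, y j < y i → 0 ≤ z t i - z t j := by
    intro t ht1 ht2 i j hij
    by_contra hneg
    push_neg at hneg
    have hd : ∀ s : ℝ, z s i - z s j = (y i - y j) + s * (c i - c j) := by
      intro s
      rw [hzeq, hzeq]
      ring
    set k : ℝ := c i - c j with hkdef
    have hdt : (y i - y j) + t * k < 0 := by rw [← hd t]; linarith
    have hk0 : k ≠ 0 := by
      intro h
      rw [h, mul_zero, add_zero] at hdt
      linarith
    set t0 : ℝ := -(y i - y j) / k with ht0def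
    have hz0 : z t0 i = z t0 j := by
      have : z t0 i - z t0 j = 0 := by
        rw [hd t0, ht0def]
        field_simp [hk0]
        ring
      linarith
    have hbetween : tn < t0 ∧ t0 < tp := by
      rcases lt_or_gt_of_ne hk0 with hk | hk
      · -- k < 0 : 0 < t0 < t
        have h1 : 0 < t0 := by
          rw [ht0def]
          apply div_pos_of_neg_of_neg _ hk
          linarith
        have h2 : t0 < t := by
          rw [ht0def, div_lt_iff_of_neg hk]
          nlinarith
        exact ⟨by linarith, by linarith⟩
      · -- k > 0 : t < t0 < 0
        have h1 : t0 < 0 := by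
          rw [ht0def]
          apply div_neg_of_neg_of_pos _ hk
          linarith
        have h2 : t < t0 := by
          rw [ht0def, lt_div_iff₀ hk]
          nlinarith
        exact ⟨by linarith, by linarith⟩
    exact hcross t0 hbetween.1 hbetween.2 i j (ne_of_gt hij) hz0
  set s : Fin n → Fin n → ℝ :=
    fun i j => if y j < y i then 1 else if y i < y j then -1 else 0 with hsdef
  clear_value s
  have habs : ∀ t : ℝ, tn ≤ t → t ≤ tp → ∀ i j,
      |z t i - z t j| = s i j * (z t i - z t j) := by
    intro t ht1 ht2 i j
    rcases lt_trichotomy (y i) (y j) with h | h | h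
    · have h1 := hnonneg t ht1 ht2 j i h
      have hs : s i j = -1 := by
        simp only [hsdef, if_neg (not_lt.mpr (le_of_lt h)), if_pos h]
      rw [hs, abs_of_nonpos (by linarith)]
      ring
    · have hzz : z t i = z t j := by
        simp only [hzdef, h, hcy i j h]
      have hs : s i j = 0 := by
        simp only [hsdef, h, lt_self_iff_false, if_false]
      rw [hs, hzz]
      simp
    · have h1 := hnonneg t ht1 ht2 i j h
      have hs : s i j = 1 := by
        simp only [hsdef, if_pos h]
      rw [hs, abs_of_nonneg h1]
      ring
  -- total error is affine on [tn, tp]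
  set S : ℝ := ∑ i, ∑ j, W i j * (s i j * (c i - c j)) with hSdef
  clear_value S
  have hsum : ∀ t : ℝ, tn ≤ t → t ≤ tp →
      ∑ i, ∑ j, W i j * |z t i - z t j|
        = (∑ i, ∑ j, W i j * (s i j * (y i - y j))) + t * S := by
    intro t ht1 ht2
    rw [hSdef, Finset.mul_sum, ← Finset.sum_add_distrib]
    apply Finset.sum_congr rfl
    intro i _
    rw [Finset.mul_sum, ← Finset.sum_add_distrib]
    apply Finset.sum_congr rfl
    intro j _
    rw [habs t ht1 ht2 i j, hzeq, hzeq]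
    ring
  have hAeq : (∑ i, ∑ j, W i j * (s i j * (y i - y j))) = ∑ i, ∑ j, W i j * |y i - y j| := by
    have h0 := hsum 0 (le_of_lt htn0) (le_of_lt htp0)
    simp only [hzeq, zero_mul, add_zero, mul_zero] at h0
    linarith
  -- bounds for β + r * t on [tn, tp]
  have hbβ : ∀ t : ℝ, tn ≤ t → t ≤ tp → 0 ≤ β + r * t ∧ β + r * t ≤ 1 := by
    intro t ht1 ht2
    rcases lt_or_gt_of_ne hr with hrneg | hrpos
    · have hm1 : -β / r ∈ P := by
        rw [hPdef]
        refine Finset.mem_filter.mpr ⟨hmem4 (-β / r) (by simp), ?_⟩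
        apply div_pos_of_neg_of_neg _ hrneg
        linarith
      have hm2 : (1 - β) / r ∈ Nn := by
        rw [hNndef]
        refine Finset.mem_filter.mpr ⟨hmem4 ((1 - β) / r) (by simp), ?_⟩
        apply div_neg_of_pos_of_neg _ hrneg
        linarith
      have h1 : tp ≤ -β / r := htpmin _ hm1
      have h2 : (1 - β) / r ≤ tn := htnmax _ hm2
      constructor
      · have : t ≤ -β / r := by linarith
        rw [le_div_iff_of_neg hrneg] at this
        linarith
      · have : (1 - β) / r ≤ t := by linarith
        rw [div_le_iff_of_neg hrneg] at this
        linarith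
    · have hm1 : -β / r ∈ Nn := by
        rw [hNndef]
        refine Finset.mem_filter.mpr ⟨hmem4 (-β / r) (by simp), ?_⟩
        apply div_neg_of_neg_of_pos _ hrpos
        linarith
      have hm2 : (1 - β) / r ∈ P := by
        rw [hPdef]
        refine Finset.mem_filter.mpr ⟨hmem4 ((1 - β) / r) (by simp), ?_⟩
        apply div_pos _ hrpos
        linarith
      have h1 : tp ≤ (1 - β) / r := htpmin _ hm2
      have h2 : -β / r ≤ tn := htnmax _ hm1
      constructor
      · have : -β / r ≤ t := by linarith
        rw [div_le_iff₀ hrpos] at this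
        linarith
      · have : t ≤ (1 - β) / r := by linarith
        rw [le_div_iff₀ hrpos] at this
        linarith
  -- coordinate bounds
  have hcoord : ∀ t : ℝ, tn ≤ t → t ≤ tp → ∀ i, z t i ∈ Set.Icc (0:ℝ) 1 := by
    intro t ht1 ht2 i
    by_cases h1 : y i = α
    · have hz : z t i = α + t := by
        rw [hzeq, hcα i h1, h1]
        ring
      rw [hz, Set.mem_Icc]
      constructor <;> linarith
    · by_cases h2 : y i = β
      · have hz : z t i = β + r * t := by
          rw [hzeq, hcβ i h1 h2, h2]
          ring
        rw [hz, Set.mem_Icc]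
        exact hbβ t ht1 ht2
      · have hz : z t i = y i := by
          rw [hzeq, hc0 i h1 h2]
          ring
        rw [hz]
        exact hfeas1 i
  -- objective terms
  have hobjterm : ∀ t : ℝ, tn ≤ t → t ≤ tp → ∀ i,
      |z t i - y' i| = |y i - y' i| + t * (c i * (1 - 2 * y' i)) := by
    intro t ht1 ht2 i
    obtain ⟨hz1, hz2⟩ := hcoord t ht1 ht2 i
    obtain ⟨hy1, hy2⟩ := hfeas1 i
    have hzt : z t i = y i + t * c i := hzeq t i
    rcases hy' i with h | h <;> rw [h]
    · rw [sub_zero, sub_zero, abs_of_nonneg hz1, abs_of_nonneg hy1, hzt]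
      ring
    · rw [abs_of_nonpos (by linarith), abs_of_nonpos (by linarith)]
      rw [hzt]
      ring
  -- cluster sums
  have hsplit : ∀ γ : ℝ,
      ∑ i ∈ Finset.univ.filter (fun i => y i = γ), (1 - 2 * y' i)
        = ((Finset.univ.filter (fun i => y i = γ ∧ y' i = 0)).card : ℝ)
          - ((Finset.univ.filter (fun i => y i = γ ∧ y' i = 1)).card : ℝ) := by
    intro γ
    rw [← Finset.sum_filter_add_sum_filter_not (Finset.univ.filter (fun i => y i = γ))
      (fun i => y' i = 0)]
    have e1 : (Finset.univ.filter (fun i => y i = γ)).filter (fun i => y' i = 0)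
        = Finset.univ.filter (fun i => y i = γ ∧ y' i = 0) := by
      rw [Finset.filter_filter]
    have e2 : (Finset.univ.filter (fun i => y i = γ)).filter (fun i => ¬ y' i = 0)
        = Finset.univ.filter (fun i => y i = γ ∧ y' i = 1) := by
      rw [Finset.filter_filter]
      apply Finset.filter_congr
      intro i _
      constructor
      · rintro ⟨h1, h2⟩
        exact ⟨h1, (hy' i).resolve_left h2⟩
      · rintro ⟨h1, h2⟩
        exact ⟨h1, by rw [h2]; norm_num⟩
    rw [e1, e2]
    have s1 : ∑ i ∈ Finset.univ.filter (fun i => y i = γ ∧ y' i = 0), (1 - 2 * y' i)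
        = ((Finset.univ.filter (fun i => y i = γ ∧ y' i = 0)).card : ℝ) := by
      have e : ∑ i ∈ Finset.univ.filter (fun i => y i = γ ∧ y' i = 0), (1 - 2 * y' i)
          = ∑ _i ∈ Finset.univ.filter (fun i => y i = γ ∧ y' i = 0), (1 : ℝ) := by
        apply Finset.sum_congr rfl
        intro i hi
        have := (Finset.mem_filter.mp hi).2.2
        rw [this]; norm_num
      rw [e, Finset.sum_const, nsmul_eq_mul, mul_one]
    have s2 : ∑ i ∈ Finset.univ.filter (fun i => y i = γ ∧ y' i = 1), (1 - 2 * y' i)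
        = -((Finset.univ.filter (fun i => y i = γ ∧ y' i = 1)).card : ℝ) := by
      have e : ∑ i ∈ Finset.univ.filter (fun i => y i = γ ∧ y' i = 1), (1 - 2 * y' i)
          = ∑ _i ∈ Finset.univ.filter (fun i => y i = γ ∧ y' i = 1), (-1 : ℝ) := by
        apply Finset.sum_congr rfl
        intro i hi
        have := (Finset.mem_filter.mp hi).2.2
        rw [this]; norm_num
      rw [e, Finset.sum_const, nsmul_eq_mul]
      ring
    rw [s1, s2]
    ring
  have hsigma : ∑ i, c i * (1 - 2 * y' i) = 0 := by
    rw [← Finset.sum_filter_add_sum_filter_not Finset.univ (fun i => y i = α)]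
    have e1 : ∑ i ∈ Finset.univ.filter (fun i => y i = α), c i * (1 - 2 * y' i)
        = ∑ i ∈ Finset.univ.filter (fun i => y i = α), (1 - 2 * y' i) := by
      apply Finset.sum_congr rfl
      intro i hi
      have hyi := (Finset.mem_filter.mp hi).2
      simp only [hcdef, if_pos hyi, one_mul]
    rw [e1, hsplit α]
    rw [← Finset.sum_filter_add_sum_filter_not (Finset.univ.filter (fun i => ¬ y i = α))
      (fun i => y i = β)]
    have e2 : (Finset.univ.filter (fun i => ¬ y i = α)).filter (fun i => y i = β)
        = Finset.univ.filter (fun i => y i = β) := by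
      rw [Finset.filter_filter]
      apply Finset.filter_congr
      intro i _
      constructor
      · rintro ⟨_, h⟩; exact h
      · intro h; exact ⟨by rw [h]; exact (Ne.symm hαβ'), h⟩
    have e3 : ∑ i ∈ (Finset.univ.filter (fun i => ¬ y i = α)).filter (fun i => y i = β),
        c i * (1 - 2 * y' i)
        = r * ∑ i ∈ Finset.univ.filter (fun i => y i = β), (1 - 2 * y' i) := by
      rw [e2, Finset.mul_sum]
      apply Finset.sum_congr rfl
      intro i hi
      have hyi := (Finset.mem_filter.mp hi).2
      have hyiα : ¬ y i = α := by rw [hyi]; exact Ne.symm hαβ'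
      simp only [hcdef, if_neg hyiα, if_pos hyi]
    have e4 : ∑ i ∈ (Finset.univ.filter (fun i => ¬ y i = α)).filter (fun i => ¬ y i = β),
        c i * (1 - 2 * y' i) = 0 := by
      apply Finset.sum_eq_zero
      intro i hi
      have h1 := (Finset.mem_filter.mp hi).2
      have h2 := (Finset.mem_filter.mp (Finset.mem_filter.mp hi).1).2
      simp only [hcdef, if_neg h2, if_neg h1, zero_mul]
    rw [e3, e4, hsplit β]
    rw [← hNadef, ← hNbdef, hrdef]
    field_simp [hNb]
    ring
  have hobj : ∀ t : ℝ, tn ≤ t → t ≤ tp →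
      ∑ i, |z t i - y' i| = ∑ i, |y i - y' i| := by
    intro t ht1 ht2
    rw [Finset.sum_congr rfl (fun i _ => hobjterm t ht1 ht2 i), Finset.sum_add_distrib]
    rw [← Finset.mul_sum, hsigma, mul_zero, add_zero]
  -- choose the good endpoint
  set tstar : ℝ := if S ≤ 0 then tp else tn with htsdef
  clear_value tstar
  have hcase : (tstar = tp ∧ S ≤ 0) ∨ (tstar = tn ∧ 0 ≤ S) := by
    rw [htsdef]
    by_cases h : S ≤ 0
    · left; rw [if_pos h]; exact ⟨rfl, h⟩
    · right; rw [if_neg h]; exact ⟨rfl, le_of_not_ge h⟩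
  have hts1 : tn ≤ tstar := by
    rcases hcase with ⟨h, -⟩ | ⟨h, -⟩ <;> rw [h] <;> linarith
  have hts2 : tstar ≤ tp := by
    rcases hcase with ⟨h, -⟩ | ⟨h, -⟩ <;> rw [h] <;> linarith
  have htsS : tstar * S ≤ 0 := by
    rcases hcase with ⟨h, hS⟩ | ⟨h, hS⟩ <;> rw [h]
    · exact mul_nonpos_of_nonneg_of_nonpos (le_of_lt htp0) hS
    · exact mul_nonpos_of_nonpos_of_nonneg (le_of_lt htn0) hS
  have htsE : tstar ∈ Ecand := by
    rcases hcase with ⟨h, -⟩ | ⟨h, -⟩ <;> rw [h] <;> assumption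
  have hts0 : tstar ≠ 0 := by
    rcases hcase with ⟨h, -⟩ | ⟨h, -⟩ <;> rw [h] <;> linarith
  set a' : ℝ := α + tstar with ha'def
  set b' : ℝ := β + r * tstar with hb'def
  clear_value a' b'
  have hift : ∀ i, (if y i = α then a' else if y i = β then b' else y i) = z tstar i := by
    intro i
    rw [hzeq]
    split_ifs with h1 h2
    · rw [hcα i h1, h1, ha'def]; ring
    · rw [hcβ i h1 h2, h2, hb'def]; ring
    · rw [hc0 i h1 h2]; ring
  have ha'I : a' ∈ Set.Icc (0:ℝ) 1 := by
    constructor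
    · rw [ha'def]; linarith
    · rw [ha'def]; linarith
  have hb'I : b' ∈ Set.Icc (0:ℝ) 1 := by
    obtain ⟨h1, h2⟩ := hbβ tstar hts1 hts2
    exact ⟨by rw [hb'def]; linarith, by rw [hb'def]; linarith⟩
  -- the event at tstar
  have hhit : a' = 0 ∨ a' = 1 ∨ b' = 0 ∨ b' = 1 ∨ a' = b'
      ∨ (∃ k, y k ≠ α ∧ y k ≠ β ∧ a' = y k)
      ∨ (∃ k, y k ≠ α ∧ y k ≠ β ∧ b' = y k) := by
    rw [hEdef] at htsE
    rcases Finset.mem_union.mp htsE with hI | hF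
    · -- genuine crossing
      obtain ⟨p, -, hp⟩ := Finset.mem_image.mp hI
      have hcp : c p.1 ≠ c p.2 := by
        intro h
        rw [h, sub_self, div_zero] at hp
        exact hts0 hp.symm
      have hyp : y p.1 ≠ y p.2 := fun h => hcp (hcy _ _ h)
      have hzz : z tstar p.1 = z tstar p.2 := by
        rw [hzeq, hzeq, ← hp]
        field_simp [sub_ne_zero.mpr hcp]
        ring
      -- analyze which clusters are involved
      have hzi : ∀ i, z tstar i = if y i = α then a' else if y i = β then b' else y i :=
        fun i => (hift i).symm
      by_cases h1a : y p.1 = α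
      · by_cases h2b : y p.2 = β
        · right; right; right; right; left
          rw [hzi p.1, hzi p.2, if_pos h1a, if_neg (by rw [h2b]; exact Ne.symm hαβ'),
            if_pos h2b] at hzz
          exact hzz
        · by_cases h2a : y p.2 = α
          · exact absurd (h1a.trans h2a.symm) hyp
          · right; right; right; right; right; left
            refine ⟨p.2, h2a, h2b, ?_⟩
            rw [hzi p.1, hzi p.2, if_pos h1a, if_neg h2a, if_neg h2b] at hzz
            exact hzz
      · by_cases h1b : y p.1 = β
        · by_cases h2a : y p.2 = α
          · right; right; right; right; left
            rw [hzi p.1, hzi p.2, if_neg h1a, if_pos h1b, if_pos h2a] at hzz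
            exact hzz.symm
          · by_cases h2b : y p.2 = β
            · exact absurd (h1b.trans h2b.symm) hyp
            · right; right; right; right; right; right
              refine ⟨p.2, h2a, h2b, ?_⟩
              rw [hzi p.1, hzi p.2, if_neg h1a, if_pos h1b, if_neg h2a, if_neg h2b] at hzz
              exact hzz
        · by_cases h2a : y p.2 = α
          · right; right; right; right; right; left
            refine ⟨p.1, h1a, h1b, ?_⟩
            rw [hzi p.1, hzi p.2, if_neg h1a, if_neg h1b, if_pos h2a] at hzz
            exact hzz.symm
          · by_cases h2b : y p.2 = β
            · right; right; right; right; right; right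
              refine ⟨p.1, h1a, h1b, ?_⟩
              rw [hzi p.1, hzi p.2, if_neg h1a, if_neg h1b, if_neg h2a, if_pos h2b] at hzz
              exact hzz.symm
            · rw [hzi p.1, hzi p.2, if_neg h1a, if_neg h1b, if_neg h2a, if_neg h2b] at hzz
              exact absurd hzz hyp
    · -- boundary event
      simp only [Finset.mem_insert, Finset.mem_singleton] at hF
      rcases hF with h | h | h | h
      · left; rw [ha'def, h]; ring
      · right; left; rw [ha'def, h]; ring
      · right; right; left
        rw [hb'def, h]
        field_simp [hr]
        ring
      · right; right; right; left
        rw [hb'def, h]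
        field_simp [hr]
        ring
  -- counting distinct interior values
  set Aset : Finset ℝ := (Finset.univ.image y).filter (fun v => 0 < v ∧ v < 1) with hAdef
  set R : Finset ℝ := (Aset.erase α).erase β with hRdef
  clear_value Aset R
  have hαA : α ∈ Aset := by
    rw [hAdef]
    refine Finset.mem_filter.mpr ⟨?_, hα0, hα1⟩
    obtain ⟨i, hi⟩ := hSα
    exact Finset.mem_image.mpr ⟨i, Finset.mem_univ i, hi⟩
  have hβA : β ∈ Aset := by
    rw [hAdef]
    refine Finset.mem_filter.mpr ⟨?_, hβ0, hβ1⟩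
    obtain ⟨i, hi⟩ := hSβ
    exact Finset.mem_image.mpr ⟨i, Finset.mem_univ i, hi⟩
  have hβe : β ∈ Aset.erase α := Finset.mem_erase.mpr ⟨Ne.symm hαβ', hβA⟩
  have hcardA : Aset.card = R.card + 2 := by
    have h1 := Finset.card_erase_add_one hαA
    have h2 := Finset.card_erase_add_one hβe
    rw [hRdef]
    omega
  have hRmem : ∀ k, y k ≠ α → y k ≠ β → 0 < y k → y k < 1 → y k ∈ R := by
    intro k hk1 hk2 hk3 hk4
    rw [hRdef]
    refine Finset.mem_erase.mpr ⟨hk2, Finset.mem_erase.mpr ⟨hk1, ?_⟩⟩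
    rw [hAdef]
    exact Finset.mem_filter.mpr
      ⟨Finset.mem_image.mpr ⟨k, Finset.mem_univ k, rfl⟩, hk3, hk4⟩
  have hdecomp : ∀ v ∈ (Finset.univ.image (z tstar)).filter (fun v => 0 < v ∧ v < 1),
      (0 < v ∧ v < 1) ∧ (v = a' ∨ v = b' ∨ v ∈ R) := by
    intro v hv
    obtain ⟨hvim, hv01⟩ := Finset.mem_filter.mp hv
    obtain ⟨k, -, hk⟩ := Finset.mem_image.mp hvim
    refine ⟨hv01, ?_⟩
    by_cases h1 : y k = α
    · left; rw [← hk, ← hift k, if_pos h1]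
    · by_cases h2 : y k = β
      · right; left; rw [← hk, ← hift k, if_neg h1, if_pos h2]
      · right; right
        have hzk : z tstar k = y k := by rw [← hift k, if_neg h1, if_neg h2]
        have hvy : v = y k := by rw [← hk, hzk]
        rw [hvy]
        exact hRmem k h1 h2 (by rw [← hvy]; exact hv01.1) (by rw [← hvy]; exact hv01.2)
  have hnewsub : ∃ w : ℝ, (Finset.univ.image (z tstar)).filter (fun v => 0 < v ∧ v < 1)
      ⊆ insert w R := by
    rcases hhit with h | h | h | h | h | ⟨k, hk1, hk2, hk3⟩ | ⟨k, hk1, hk2, hk3⟩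
    · refine ⟨b', fun v hv => ?_⟩
      obtain ⟨⟨hv0, hv1⟩, hd⟩ := hdecomp v hv
      rcases hd with hd | hd | hd
      · rw [hd, h] at hv0; linarith
      · rw [hd]; exact Finset.mem_insert_self _ _
      · exact Finset.mem_insert_of_mem hd
    · refine ⟨b', fun v hv => ?_⟩
      obtain ⟨⟨hv0, hv1⟩, hd⟩ := hdecomp v hv
      rcases hd with hd | hd | hd
      · rw [hd, h] at hv1; linarith
      · rw [hd]; exact Finset.mem_insert_self _ _
      · exact Finset.mem_insert_of_mem hd
    · refine ⟨a', fun v hv => ?_⟩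
      obtain ⟨⟨hv0, hv1⟩, hd⟩ := hdecomp v hv
      rcases hd with hd | hd | hd
      · rw [hd]; exact Finset.mem_insert_self _ _
      · rw [hd, h] at hv0; linarith
      · exact Finset.mem_insert_of_mem hd
    · refine ⟨a', fun v hv => ?_⟩
      obtain ⟨⟨hv0, hv1⟩, hd⟩ := hdecomp v hv
      rcases hd with hd | hd | hd
      · rw [hd]; exact Finset.mem_insert_self _ _
      · rw [hd, h] at hv1; linarith
      · exact Finset.mem_insert_of_mem hd
    · refine ⟨a', fun v hv => ?_⟩
      obtain ⟨⟨hv0, hv1⟩, hd⟩ := hdecomp v hv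
      rcases hd with hd | hd | hd
      · rw [hd]; exact Finset.mem_insert_self _ _
      · rw [hd, ← h]; exact Finset.mem_insert_self _ _
      · exact Finset.mem_insert_of_mem hd
    · refine ⟨b', fun v hv => ?_⟩
      obtain ⟨⟨hv0, hv1⟩, hd⟩ := hdecomp v hv
      rcases hd with hd | hd | hd
      · apply Finset.mem_insert_of_mem
        rw [hd, hk3]
        exact hRmem k hk1 hk2 (by rw [← hk3, ← hd]; exact hv0) (by rw [← hk3, ← hd]; exact hv1)
      · rw [hd]; exact Finset.mem_insert_self _ _
      · exact Finset.mem_insert_of_mem hd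
    · refine ⟨a', fun v hv => ?_⟩
      obtain ⟨⟨hv0, hv1⟩, hd⟩ := hdecomp v hv
      rcases hd with hd | hd | hd
      · rw [hd]; exact Finset.mem_insert_self _ _
      · apply Finset.mem_insert_of_mem
        rw [hd, hk3]
        exact hRmem k hk1 hk2 (by rw [← hk3, ← hd]; exact hv0) (by rw [← hk3, ← hd]; exact hv1)
      · exact Finset.mem_insert_of_mem hd
  obtain ⟨w, hw⟩ := hnewsub
  have hcount : ((Finset.univ.image (z tstar)).filter (fun v => 0 < v ∧ v < 1)).card
      < Aset.card := by
    calc ((Finset.univ.image (z tstar)).filter (fun v => 0 < v ∧ v < 1)).card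
        ≤ (insert w R).card := Finset.card_le_card hw
      _ ≤ R.card + 1 := Finset.card_insert_le _ _
      _ < R.card + 2 := by omega
      _ = Aset.card := hcardA.symm
  -- assemble
  refine ⟨a', b', ha'I, hb'I, ?_, ?_, ?_, ?_⟩
  · intro i
    rw [hift i]
    exact hcoord tstar hts1 hts2 i
  · have heqfun : ∀ i j, (if y i = α then a' else if y i = β then b' else y i)
        - (if y j = α then a' else if y j = β then b' else y j) = z tstar i - z tstar j := by
      intro i j; rw [hift i, hift j]
    calc ∑ i, ∑ j, W i j *
          |(if y i = α then a' else if y i = β then b' else y i)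
            - (if y j = α then a' else if y j = β then b' else y j)|
        = ∑ i, ∑ j, W i j * |z tstar i - z tstar j| := by
          apply Finset.sum_congr rfl; intro i _
          apply Finset.sum_congr rfl; intro j _
          rw [heqfun i j]
      _ = (∑ i, ∑ j, W i j * (s i j * (y i - y j))) + tstar * S := hsum tstar hts1 hts2
      _ ≤ m := by rw [hAeq]; linarith
  · calc ∑ i, |(if y i = α then a' else if y i = β then b' else y i) - y' i|
        = ∑ i, |z tstar i - y' i| := by
          apply Finset.sum_congr rfl; intro i _
          rw [hift i]
      _ = ∑ i, |y i - y' i| := hobj tstar hts1 hts2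
  · have heqf : (fun i => if y i = α then a' else if y i = β then b' else y i) = z tstar :=
      funext hift
    rw [heqf]
    exact hcount
end

section
/- Let n ∈ ℕ, let W : Fin n → Fin n → ℝ be a symmetric matrix with nonnegative entries, let m ≥ 0, and let α ∈ (0,1). Suppose ŷ : Fin n → ℝ has every component in {0, α, 1} and satisfies Σ_i Σ_j W i j * |ŷ i − ŷ j| ≤ m. Define M_{0α} = Σ over pairs (i,j) with ŷ i = 0 and ŷ j = α of W i j, and M_{1α} = Σ over pairs (i,j) with ŷ i = 1 and ŷ j = α of W i j. Let ȳ be the labeling obtained from ŷ by replacing every component equal to α with 1 if M_{0α} ≤ M_{1α}, and with 0 otherwise. Then ȳ has all components in {0,1} and Σ_i Σ_j W i j * |ȳ i − ȳ j| ≤ m. -/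
open Finset

open scoped Classical in
/-- Lemma 3: Adaptive rounding of a feasible three-valued labeling
(rounding α toward the side with larger adjacent similarity mass) always yields a
feasible binary labeling. -/
theorem adaptive_rounding_feasible (n : ℕ) (W : Fin n → Fin n → ℝ)
    (hWsymm : ∀ i j, W i j = W j i) (hWnonneg : ∀ i j, 0 ≤ W i j)
    (m : ℝ) (hm : 0 ≤ m) (α : ℝ) (hα : α ∈ Set.Ioo (0:ℝ) 1)
    (yhat : Fin n → ℝ) (hval : ∀ i, yhat i = 0 ∨ yhat i = α ∨ yhat i = 1)
    (hfeas : ∑ i, ∑ j, W i j * |yhat i - yhat j| ≤ m) :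
    let M0α := ∑ i, ∑ j, if yhat i = 0 ∧ yhat j = α then W i j else 0
    let M1α := ∑ i, ∑ j, if yhat i = 1 ∧ yhat j = α then W i j else 0
    let ybar : Fin n → ℝ :=
      fun i => if yhat i = α then (if M0α ≤ M1α then 1 else 0) else yhat i
    (∀ i, ybar i = 0 ∨ ybar i = 1) ∧
      ∑ i, ∑ j, W i j * |ybar i - ybar j| ≤ m := by
  obtain ⟨hα0, hα1⟩ := hα
  have hαne0 : α ≠ 0 := ne_of_gt hα0
  have hαne1 : α ≠ 1 := ne_of_lt hα1
  have h0α : (0:ℝ) ≠ α := Ne.symm hαne0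
  have h1α : (1:ℝ) ≠ α := Ne.symm hαne1
  have h01 : (0:ℝ) ≠ 1 := by norm_num
  have h10 : (1:ℝ) ≠ 0 := by norm_num
  have habs1 : |(0:ℝ) - α| = α := by rw [zero_sub, abs_neg, abs_of_pos hα0]
  have habs2 : |α - 0| = α := by rw [sub_zero, abs_of_pos hα0]
  have habs3 : |(0:ℝ) - 1| = 1 := by norm_num
  have habs4 : |(1:ℝ) - 0| = 1 := by norm_num
  have habs5 : |α - 1| = 1 - α := by
    rw [abs_sub_comm, abs_of_pos (by linarith)]
  have habs7 : |α| = α := abs_of_pos hα0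
  have habs6 : |(1:ℝ) - α| = 1 - α := abs_of_pos (by linarith)
  intro M0α M1α ybar
  have hswap : ∀ c : ℝ,
      (∑ i, ∑ j, if yhat i = α ∧ yhat j = c then W i j else 0)
      = ∑ i, ∑ j, if yhat i = c ∧ yhat j = α then W i j else 0 := by
    intro c
    rw [Finset.sum_comm]
    refine Finset.sum_congr rfl fun i _ => Finset.sum_congr rfl fun j _ => ?_
    rcases em (yhat j = α ∧ yhat i = c) with h | h
    · rw [if_pos h, if_pos ⟨h.2, h.1⟩, hWsymm]
    · rw [if_neg h, if_neg fun hc => h ⟨hc.2, hc.1⟩]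
  constructor
  · intro i
    simp only [ybar]
    rcases hval i with h | h | h
    · rw [h, if_neg h0α]; left; rfl
    · rw [h, if_pos rfl]
      by_cases hM : M0α ≤ M1α
      · right; rw [if_pos hM]
      · left; rw [if_neg hM]
    · rw [h, if_neg h1α]; right; rfl
  · by_cases hM : M0α ≤ M1α
    · have key : ∀ i j, W i j * |ybar i - ybar j|
          = W i j * |yhat i - yhat j|
            + (1 - α) * (if yhat i = 0 ∧ yhat j = α then W i j else 0)
            + (1 - α) * (if yhat i = α ∧ yhat j = 0 then W i j else 0)
            - (1 - α) * (if yhat i = 1 ∧ yhat j = α then W i j else 0)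
            - (1 - α) * (if yhat i = α ∧ yhat j = 1 then W i j else 0) := by
        intro i j
        simp only [ybar]
        rcases hval i with hi | hi | hi <;> rcases hval j with hj | hj | hj <;>
          rw [hi, hj] <;>
          simp [hM, h0α, h1α, h01, h10, hαne0, hαne1, habs1, habs2, habs3,
            habs4, habs5, habs6, habs7] <;> ring
      have hsum : ∑ i, ∑ j, W i j * |ybar i - ybar j|
          = (∑ i, ∑ j, W i j * |yhat i - yhat j|)
            + (1 - α) * M0α
            + (1 - α) * (∑ i, ∑ j, if yhat i = α ∧ yhat j = 0 then W i j else 0)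
            - (1 - α) * M1α
            - (1 - α) * (∑ i, ∑ j, if yhat i = α ∧ yhat j = 1 then W i j else 0) := by
        simp only [key, Finset.sum_add_distrib, Finset.sum_sub_distrib,
          ← Finset.mul_sum, M0α, M1α]
      rw [hsum, hswap 0, hswap 1]
      have h2 : (1 - α) * M0α ≤ (1 - α) * M1α :=
        mul_le_mul_of_nonneg_left hM (by linarith)
      show (∑ i, ∑ j, W i j * |yhat i - yhat j|)
            + (1 - α) * M0α + (1 - α) * M0α - (1 - α) * M1α - (1 - α) * M1α ≤ m
      linarith
    · have hM' : M1α ≤ M0α := le_of_lt (lt_of_not_ge hM)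
      have key : ∀ i j, W i j * |ybar i - ybar j|
          = W i j * |yhat i - yhat j|
            + α * (if yhat i = 1 ∧ yhat j = α then W i j else 0)
            + α * (if yhat i = α ∧ yhat j = 1 then W i j else 0)
            - α * (if yhat i = 0 ∧ yhat j = α then W i j else 0)
            - α * (if yhat i = α ∧ yhat j = 0 then W i j else 0) := by
        intro i j
        simp only [ybar]
        rcases hval i with hi | hi | hi <;> rcases hval j with hj | hj | hj <;>
          rw [hi, hj] <;>
          simp [hM, h0α, h1α, h01, h10, hαne0, hαne1, habs1, habs2, habs3,
            habs4, habs5, habs6, habs7] <;> ring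
      have hsum : ∑ i, ∑ j, W i j * |ybar i - ybar j|
          = (∑ i, ∑ j, W i j * |yhat i - yhat j|)
            + α * M1α
            + α * (∑ i, ∑ j, if yhat i = α ∧ yhat j = 1 then W i j else 0)
            - α * M0α
            - α * (∑ i, ∑ j, if yhat i = α ∧ yhat j = 0 then W i j else 0) := by
        simp only [key, Finset.sum_add_distrib, Finset.sum_sub_distrib,
          ← Finset.mul_sum, M0α, M1α]
      rw [hsum, hswap 0, hswap 1]
      have h2 : α * M1α ≤ α * M0α :=
        mul_le_mul_of_nonneg_left hM' (le_of_lt hα0)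
      show (∑ i, ∑ j, W i j * |yhat i - yhat j|)
            + α * M1α + α * M1α - α * M0α - α * M0α ≤ m
      linarith
end

section
/- Let n ∈ ℕ, let W : Fin n → Fin n → ℝ be a symmetric matrix with nonnegative entries, let y' : Fin n → ℝ take values in {0,1}, let m ≥ 0, and let α ∈ (0,1). Suppose ŷ minimizes Σ_i |y i − y' i| over the LP feasible set {y : ∀ i, y i ∈ [0,1] and Σ_i Σ_j W i j * |y i − y j| ≤ m}, every component of ŷ lies in {0, α, 1}, and the ILP feasible set {y : ∀ i, y i ∈ {0,1} and total error ≤ m} is nonempty with optimal objective value OPT_ILP. Let N_{0α} = #{i : y' i = 0, ŷ i = α} and N_{1α} = #{i : y' i = 1, ŷ i = α}. If ȳ is obtained from ŷ by replacing every α with 1, then Σ_i |ȳ i − y' i| ≤ OPT_ILP + (1 − α)(N_{0α} − N_{1α}); if ȳ is obtained by replacing every α with 0, then Σ_i |ȳ i − y' i| ≤ OPT_ILP + α(N_{1α} − N_{0α}). -/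
/-!
An integral labeling is feasible for the LP relaxation, so the LP optimum `ŷ` costs at most
`OPT_ILP`. Rounding a coordinate with `ŷ i = α` to `1` changes its term `|ŷ i - y' i|` by
`1 - α` if `y' i = 0` and by `-(1 - α)` if `y' i = 1`; rounding it to `0` changes it by `-α`
and `α` respectively. Summing these changes gives the two bounds.
-/

open Finset

theorem sum_eq_sum_add_mul_card_sub_card {ι : Type*} [Fintype ι] {f g : ι → ℝ} {k : ℝ}
    {p q : ι → Prop} [DecidablePred p] [DecidablePred q]
    (h : ∀ i, f i = g i + k * ((if p i then 1 else 0) - (if q i then 1 else 0))) :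
    ∑ i, f i = ∑ i, g i + k * ((#{i | p i} : ℝ) - #{i | q i}) := by
  simp only [h, sum_add_distrib, ← mul_sum, sum_sub_distrib, sum_boole]

theorem abs_ite_one_sub {x b α : ℝ} (hα : α ∈ Set.Icc (0 : ℝ) 1) (hb : b = 0 ∨ b = 1) :
    |(if x = α then 1 else x) - b| =
      |x - b| +
        (1 - α) * ((if b = 0 ∧ x = α then 1 else 0) - (if b = 1 ∧ x = α then 1 else 0)) := by
  obtain ⟨h0, h1⟩ := hα
  by_cases hx : x = α
  · subst hx
    rcases hb with rfl | rfl <;> simp [abs_of_nonneg, abs_of_nonpos, h0, h1]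
  · simp [hx]

theorem abs_ite_zero_sub {x b α : ℝ} (hα : α ∈ Set.Icc (0 : ℝ) 1) (hb : b = 0 ∨ b = 1) :
    |(if x = α then 0 else x) - b| =
      |x - b| +
        α * ((if b = 1 ∧ x = α then 1 else 0) - (if b = 0 ∧ x = α then 1 else 0)) := by
  obtain ⟨h0, h1⟩ := hα
  by_cases hx : x = α
  · subst hx
    rcases hb with rfl | rfl <;> simp [abs_of_nonneg, abs_of_nonpos, h0, h1]
  · simp [hx]

open scoped Classical in
theorem rounding_optimality_bound_general (n : ℕ) (W : Fin n → Fin n → ℝ)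
    (y' : Fin n → ℝ) (hy' : ∀ i, y' i = 0 ∨ y' i = 1)
    (m : ℝ) (α : ℝ) (hα : α ∈ Set.Ioo (0:ℝ) 1)
    (yhat : Fin n → ℝ)
    (hopt : ∀ y : Fin n → ℝ, (∀ i, y i ∈ Set.Icc (0:ℝ) 1) →
      ∑ i, ∑ j, W i j * |y i - y j| ≤ m →
      ∑ i, |yhat i - y' i| ≤ ∑ i, |y i - y' i|)
    (OPT_ILP : ℝ)
    (hILP : IsLeast {c : ℝ | ∃ y : Fin n → ℝ, (∀ i, y i = 0 ∨ y i = 1) ∧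
      (∑ i, ∑ j, W i j * |y i - y j| ≤ m) ∧ c = ∑ i, |y i - y' i|} OPT_ILP) :
    let N0α := (Finset.univ.filter (fun i => y' i = 0 ∧ yhat i = α)).card
    let N1α := (Finset.univ.filter (fun i => y' i = 1 ∧ yhat i = α)).card
    (∑ i, |(if yhat i = α then (1:ℝ) else yhat i) - y' i|
        ≤ OPT_ILP + (1 - α) * ((N0α : ℝ) - (N1α : ℝ))) ∧
    (∑ i, |(if yhat i = α then (0:ℝ) else yhat i) - y' i|
        ≤ OPT_ILP + α * ((N1α : ℝ) - (N0α : ℝ))) := by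
  obtain ⟨⟨y, hy, hy_err, rfl⟩, -⟩ := hILP
  have hlp_le_ilp : ∑ i, |yhat i - y' i| ≤ ∑ i, |y i - y' i| :=
    hopt y (fun i => by rcases hy i with h | h <;> simp [h]) hy_err
  have hα' : α ∈ Set.Icc (0 : ℝ) 1 := Set.Ioo_subset_Icc_self hα
  constructor
  · rw [sum_eq_sum_add_mul_card_sub_card fun i => abs_ite_one_sub hα' (hy' i)]
    linarith
  · rw [sum_eq_sum_add_mul_card_sub_card fun i => abs_ite_zero_sub hα' (hy' i)]
    linarith

open scoped Classical in
/-- Lemma 4: The objective of the rounded solution exceeds the ILP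
optimum by at most (1−α)(N_{0α} − N_{1α}) when rounding α to 1, and by at most
α(N_{1α} − N_{0α}) when rounding α to 0. -/
theorem rounding_optimality_bound (n : ℕ) (W : Fin n → Fin n → ℝ)
    (hWsymm : ∀ i j, W i j = W j i) (hWnonneg : ∀ i j, 0 ≤ W i j)
    (y' : Fin n → ℝ) (hy' : ∀ i, y' i = 0 ∨ y' i = 1)
    (m : ℝ) (hm : 0 ≤ m) (α : ℝ) (hα : α ∈ Set.Ioo (0:ℝ) 1)
    (yhat : Fin n → ℝ)
    (hfeas1 : ∀ i, yhat i ∈ Set.Icc (0:ℝ) 1)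
    (hfeas2 : ∑ i, ∑ j, W i j * |yhat i - yhat j| ≤ m)
    (hopt : ∀ y : Fin n → ℝ, (∀ i, y i ∈ Set.Icc (0:ℝ) 1) →
      ∑ i, ∑ j, W i j * |y i - y j| ≤ m →
      ∑ i, |yhat i - y' i| ≤ ∑ i, |y i - y' i|)
    (hval : ∀ i, yhat i = 0 ∨ yhat i = α ∨ yhat i = 1)
    (OPT_ILP : ℝ)
    (hILP : IsLeast {c : ℝ | ∃ y : Fin n → ℝ, (∀ i, y i = 0 ∨ y i = 1) ∧
      (∑ i, ∑ j, W i j * |y i - y j| ≤ m) ∧ c = ∑ i, |y i - y' i|} OPT_ILP) :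
    let N0α := (Finset.univ.filter (fun i => y' i = 0 ∧ yhat i = α)).card
    let N1α := (Finset.univ.filter (fun i => y' i = 1 ∧ yhat i = α)).card
    (∑ i, |(if yhat i = α then (1:ℝ) else yhat i) - y' i|
        ≤ OPT_ILP + (1 - α) * ((N0α : ℝ) - (N1α : ℝ))) ∧
    (∑ i, |(if yhat i = α then (0:ℝ) else yhat i) - y' i|
        ≤ OPT_ILP + α * ((N1α : ℝ) - (N0α : ℝ))) :=
  rounding_optimality_bound_general n W y' hy' m α hα yhat hopt OPT_ILP hILP
end

section
/- Let n ∈ ℕ, let W : Fin n → Fin n → ℝ be a symmetric matrix with nonnegative entries, let y' : Fin n → ℝ take values in {0,1}, let m ≥ 0, and let α ∈ (0,1). Suppose ŷ minimizes Σ_i |y i − y' i| over the LP feasible set {y : ∀ i, y i ∈ [0,1] and Σ_i Σ_j W i j * |y i − y j| ≤ m}, every component of ŷ lies in {0, α, 1}, and let ȳ be obtained from ŷ by replacing every α-component with 1; assume ȳ lies in the LP feasible set. Then, with N_{0α} = #{i : y' i = 0, ŷ i = α} and N_{1α} = #{i : y' i = 1, ŷ i = α}, the quantity (1 − α)(N_{0α}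 − N_{1α}) is nonnegative. Symmetrically, if ȳ is obtained by replacing every α with 0 and ȳ is LP-feasible, then α(N_{1α} − N_{0α}) ≥ 0. -/
open Finset

open scoped Classical in
/-- The additive gap constant of the rounding bound is nonnegative:
if rounding α to 1 stays LP-feasible then (1−α)(N_{0α} − N_{1α}) ≥ 0, and if
rounding α to 0 stays LP-feasible then α(N_{1α} − N_{0α}) ≥ 0. -/
theorem rounding_gap_nonneg (n : ℕ) (W : Fin n → Fin n → ℝ)
    (hWsymm : ∀ i j, W i j = W j i) (hWnonneg : ∀ i j, 0 ≤ W i j)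
    (y' : Fin n → ℝ) (hy' : ∀ i, y' i = 0 ∨ y' i = 1)
    (m : ℝ) (hm : 0 ≤ m) (α : ℝ) (hα : α ∈ Set.Ioo (0:ℝ) 1)
    (yhat : Fin n → ℝ)
    (hfeas1 : ∀ i, yhat i ∈ Set.Icc (0:ℝ) 1)
    (hfeas2 : ∑ i, ∑ j, W i j * |yhat i - yhat j| ≤ m)
    (hopt : ∀ y : Fin n → ℝ, (∀ i, y i ∈ Set.Icc (0:ℝ) 1) →
      ∑ i, ∑ j, W i j * |y i - y j| ≤ m →
      ∑ i, |yhat i - y' i| ≤ ∑ i, |y i - y' i|)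
    (hval : ∀ i, yhat i = 0 ∨ yhat i = α ∨ yhat i = 1) :
    let N0α := (Finset.univ.filter (fun i => y' i = 0 ∧ yhat i = α)).card
    let N1α := (Finset.univ.filter (fun i => y' i = 1 ∧ yhat i = α)).card
    ((∑ i, ∑ j, W i j * |(if yhat i = α then (1:ℝ) else yhat i)
        - (if yhat j = α then (1:ℝ) else yhat j)| ≤ m) →
      0 ≤ (1 - α) * ((N0α : ℝ) - (N1α : ℝ))) ∧
    ((∑ i, ∑ j, W i j * |(if yhat i = α then (0:ℝ) else yhat i)
        - (if yhat j = α then (0:ℝ) else yhat j)| ≤ m) →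
      0 ≤ α * ((N1α : ℝ) - (N0α : ℝ))) := by

  obtain ⟨hα0, hα1⟩ := hα
  have hA : |α| = α := abs_of_pos hα0
  have hB : |α - 1| = 1 - α := by rw [abs_of_nonpos (by linarith)]; ring
  intro N0α N1α
  have key : ∀ (c : ℝ), c ∈ Set.Icc (0:ℝ) 1 →
      (∑ i, ∑ j, W i j * |(if yhat i = α then c else yhat i)
        - (if yhat j = α then c else yhat j)| ≤ m) →
      ∑ i, |yhat i - y' i| ≤
        ∑ i, |(if yhat i = α then c else yhat i) - y' i| := by
    intro c hc hfeas
    refine hopt _ (fun i => ?_) hfeas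
    split
    · exact hc
    · exact hfeas1 i
  have hsum : ∀ (c : ℝ),
      ∑ i, (|(if yhat i = α then c else yhat i) - y' i| - |yhat i - y' i|)
      = ∑ i, ((if y' i = 0 ∧ yhat i = α then (1:ℝ) else 0) * (|c| - α)
            + (if y' i = 1 ∧ yhat i = α then (1:ℝ) else 0) * (|c - 1| - (1 - α))) := by
    intro c
    refine Finset.sum_congr rfl (fun i _ => ?_)
    rcases hy' i with hy | hy <;> rcases hval i with hv | hv | hv <;>
      simp [hy, hv, hα0.ne, hα0.ne', hα1.ne, hα1.ne', hA, hB, abs_sub_comm] <;> ring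
  have e0 : ∑ i, (if y' i = 0 ∧ yhat i = α then (1:ℝ) else 0) = (N0α : ℝ) := by
    simp [Finset.sum_boole, N0α]
  have e1 : ∑ i, (if y' i = 1 ∧ yhat i = α then (1:ℝ) else 0) = (N1α : ℝ) := by
    simp [Finset.sum_boole, N1α]
  constructor
  · intro hfeas
    have hle := key 1 ⟨zero_le_one, le_refl 1⟩ hfeas
    have h2 := hsum 1
    rw [Finset.sum_sub_distrib] at h2
    have h3 : ∑ i, ((if y' i = 0 ∧ yhat i = α then (1:ℝ) else 0) * (|(1:ℝ)| - α)
            + (if y' i = 1 ∧ yhat i = α then (1:ℝ) else 0) * (|(1:ℝ) - 1| - (1 - α)))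
        = (1 - α) * ((N0α : ℝ) - (N1α : ℝ)) := by
      simp only [Finset.sum_add_distrib, ← Finset.sum_mul]
      rw [e0, e1]
      simp only [abs_one, sub_self, abs_zero]
      ring
    rw [h3] at h2
    linarith
  · intro hfeas
    have hle := key 0 ⟨le_refl 0, zero_le_one⟩ hfeas
    have h2 := hsum 0
    rw [Finset.sum_sub_distrib] at h2
    have h3 : ∑ i, ((if y' i = 0 ∧ yhat i = α then (1:ℝ) else 0) * (|(0:ℝ)| - α)
            + (if y' i = 1 ∧ yhat i = α then (1:ℝ) else 0) * (|(0:ℝ) - 1| - (1 - α)))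
        = α * ((N1α : ℝ) - (N0α : ℝ)) := by
      simp only [Finset.sum_add_distrib, ← Finset.sum_mul]
      rw [e0, e1]
      simp only [abs_zero, zero_sub, abs_neg, abs_one]
      ring
    rw [h3] at h2
    linarith
end
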